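/- arXiv:2412.02278 — 6 statements merged into one kernel-verified Lean document; each statement's English description precedes it below -/
import Mathlib

section
/- Fix r ∈ ℕ. Let u_i : ℕ → ℝ for i = 1,...,r satisfy sup_{n ∈ ℕ} |u_i(n+1) − u_i(n)| < ∞. Then for any positive real numbers c_1,...,c_r and L_1,...,L_r, one has limsup_{t → ∞} (1/t) · Σ_{i=1}^r ( c_i · u_i(⌊t/L_i⌋) − u_i(⌊c_i t / L_i⌋) ) ≥ 0. -/
open Filter MeasureTheory intervalIntegral Set

lemma KP_abs_le_linear (u : ℕ → ℝ) (B : ℝ) (h : ∀ n, |u (n + 1) - u n| ≤ B) :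
    ∀ n : ℕ, |u n| ≤ |u 0| + n * B := by
  intro n
  induction n with
  | zero => simp
  | succ n ih =>
    have h2 := h n
    have h3 : |u (n + 1)| ≤ |u n| + B := by
      have : u (n + 1) = u n + (u (n + 1) - u n) := by ring
      rw [this]
      exact (abs_add_le _ _).trans (by linarith)
    push_cast
    linarith

lemma KP_measurable (v : ℕ → ℝ) (d : ℝ) :
    Measurable fun t : ℝ => v ⌊t / d⌋₊ / t ^ 2 := by
  apply Measurable.div
  · exact (measurable_from_top (f := v)).comp (Nat.measurable_floor.comp (measurable_id.div_const d))
  · exact measurable_id.pow_const 2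

lemma KP_integrable (v : ℕ → ℝ) (A B d : ℝ) (hd : 0 < d) (hB : 0 ≤ B)
    (hA : ∀ n : ℕ, |v n| ≤ A + n * B) {a b : ℝ} (ha : 0 < a) (hb : 0 < b) :
    IntervalIntegrable (fun t : ℝ => v ⌊t / d⌋₊ / t ^ 2) volume a b := by
  have hm : 0 < min a b := lt_min ha hb
  rw [intervalIntegrable_iff]
  apply Measure.integrableOn_of_bounded (M := (A + (max a b / d) * B) / (min a b) ^ 2)
    measure_Ioc_lt_top.ne ((KP_measurable v d).aestronglyMeasurable)
  rw [ae_restrict_iff' measurableSet_Ioc]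
  filter_upwards with x hx
  obtain ⟨hx1, hx2⟩ := hx
  have hx0 : 0 < x := hm.trans hx1
  have hA0 : 0 ≤ A := by have := hA 0; simp at this; exact (abs_nonneg _).trans this
  have h1 : |v ⌊x / d⌋₊| ≤ A + (max a b / d) * B := by
    refine (hA _).trans ?_
    gcongr
    calc (⌊x / d⌋₊ : ℝ) ≤ x / d := Nat.floor_le (by positivity)
      _ ≤ max a b / d := by gcongr
  have : ‖v ⌊x / d⌋₊ / x ^ 2‖ = |v ⌊x / d⌋₊| / x ^ 2 := by
    rw [Real.norm_eq_abs, abs_div, abs_of_nonneg (by positivity : (0:ℝ) ≤ x ^ 2)]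
  rw [this]
  exact div_le_div₀ ((abs_nonneg _).trans h1) h1 (by positivity)
    (pow_le_pow_left₀ hm.le hx1.le 2)

/-- Kenyon–Peres combinatorial lemma: if `u_1, …, u_r : ℕ → ℝ` have bounded
increments, then for any positive `c_i`, `L_i`,
`limsup_{t→∞} (1/t) Σ_i ( c_i u_i(⌊t/L_i⌋) − u_i(⌊c_i t/L_i⌋) ) ≥ 0`. -/
theorem limsup_floor_combination_nonneg (r : ℕ) (u : Fin r → ℕ → ℝ)
    (hu : ∀ i, ∃ B : ℝ, ∀ n : ℕ, |u i (n + 1) - u i n| ≤ B)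
    (c L : Fin r → ℝ) (hc : ∀ i, 0 < c i) (hL : ∀ i, 0 < L i) :
    0 ≤ Filter.limsup
      (fun t : ℝ =>
        (1 / t) * ∑ i : Fin r, (c i * u i ⌊t / L i⌋₊ - u i ⌊c i * t / L i⌋₊))
      Filter.atTop := by
  classical
  choose B hB using hu
  have hB0 : ∀ i, 0 ≤ B i := fun i => (abs_nonneg _).trans (hB i 0)
  have hlin : ∀ i (n : ℕ), |u i n| ≤ |u i 0| + n * B i :=
    fun i => KP_abs_le_linear (u i) (B i) (hB i)
  rw [Filter.limsup_eq]
  apply Real.sInf_nonneg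
  intro a ha
  by_contra hneg
  push_neg at hneg
  simp only [Set.mem_setOf_eq, eventually_atTop] at ha
  obtain ⟨T₁, hT₁⟩ := ha
  -- the functions
  set g1 : Fin r → ℝ → ℝ := fun i t => u i ⌊t / L i⌋₊ / t ^ 2 with hg1def
  set g2 : Fin r → ℝ → ℝ := fun i t => u i ⌊c i * t / L i⌋₊ / t ^ 2 with hg2def
  set gG : ℝ → ℝ :=
    fun t => (∑ i : Fin r, (c i * u i ⌊t / L i⌋₊ - u i ⌊c i * t / L i⌋₊)) / t ^ 2 with hgGdef
  -- integrability
  have hint1 : ∀ i, ∀ {a b : ℝ}, 0 < a → 0 < b → IntervalIntegrable (g1 i) volume a b := by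
    intro i a b ha hb
    exact KP_integrable (u i) (|u i 0|) (B i) (L i) (hL i) (hB0 i) (hlin i) ha hb
  have hg2eq : ∀ i, g2 i = fun t => u i ⌊t / (L i / c i)⌋₊ / t ^ 2 := by
    intro i; funext t
    rw [hg2def]
    simp only
    rw [div_div_eq_mul_div, mul_comm]
  have hint2 : ∀ i, ∀ {a b : ℝ}, 0 < a → 0 < b → IntervalIntegrable (g2 i) volume a b := by
    intro i a b ha hb
    rw [hg2eq i]
    exact KP_integrable (u i) (|u i 0|) (B i) (L i / c i) (div_pos (hL i) (hc i)) (hB0 i)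
      (hlin i) ha hb
  have hGsum : gG = fun t => ∑ i : Fin r, (c i * g1 i t - g2 i t) := by
    funext t
    rw [hgGdef, hg1def, hg2def]
    simp only
    rw [Finset.sum_div]
    refine Finset.sum_congr rfl fun i _ => ?_
    rw [sub_div, mul_div_assoc]
  have hintG : ∀ {a b : ℝ}, 0 < a → 0 < b → IntervalIntegrable gG volume a b := by
    intro a b ha hb
    have : gG = ∑ i : Fin r, (fun t => c i * g1 i t - g2 i t) := by
      rw [hGsum]; funext t; rw [Finset.sum_apply]
    rw [this]
    exact IntervalIntegrable.sum _ fun i _ => ((hint1 i ha hb).const_mul (c i)).sub (hint2 i ha hb)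
  -- substitution
  have hsub : ∀ i (T : ℝ),
      (∫ t in (1:ℝ)..T, g2 i t) = c i * ∫ s in (c i)..(c i * T), g1 i s := by
    intro i T
    have e : ∀ t : ℝ, g2 i t = c i ^ 2 * g1 i (c i * t) := by
      intro t
      show u i ⌊c i * t / L i⌋₊ / t ^ 2 = c i ^ 2 * (u i ⌊c i * t / L i⌋₊ / (c i * t) ^ 2)
      rw [mul_pow, ← mul_div_assoc, mul_div_mul_left _ _ (pow_ne_zero 2 (hc i).ne')]
    simp only [e]
    rw [intervalIntegral.integral_const_mul, intervalIntegral.integral_comp_mul_left (g1 i) (hc i).ne']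
    have hcc : c i ^ 2 * (c i)⁻¹ = c i := by
      rw [sq, mul_assoc, mul_inv_cancel₀ (hc i).ne', mul_one]
    rw [smul_eq_mul, mul_one, ← mul_assoc, hcc]
  -- splitting
  have hsplit : ∀ i, ∀ T : ℝ, 1 ≤ T →
      (∫ t in (1:ℝ)..T, g1 i t) - (∫ s in (c i)..(c i * T), g1 i s)
        = (∫ s in (1:ℝ)..(c i), g1 i s) - ∫ s in T..(c i * T), g1 i s := by
    intro i T hT
    have hT0 : (0:ℝ) < T := lt_of_lt_of_le one_pos hT
    have hcT : 0 < c i * T := mul_pos (hc i) hT0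
    have e1 := integral_add_adjacent_intervals (μ := volume) (f := g1 i)
      (hint1 i one_pos (hc i)) (hint1 i (hc i) hcT)
    have e2 := integral_add_adjacent_intervals (μ := volume) (f := g1 i)
      (hint1 i one_pos hT0) (hint1 i hT0 hcT)
    linarith
  -- boundary bound
  set K : Fin r → ℝ := fun i =>
    |c i - 1| * (|u i 0| / (min 1 (c i)) ^ 2 + B i / L i / (min 1 (c i))) with hKdef
  have hbound : ∀ i, ∀ T : ℝ, 1 ≤ T → |∫ s in T..(c i * T), g1 i s| ≤ K i := by
    intro i T hT
    have hT0 : (0:ℝ) < T := lt_of_lt_of_le one_pos hT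
    set m : ℝ := min 1 (c i) with hmdef
    have hm : 0 < m := lt_min one_pos (hc i)
    have hm1 : m ≤ 1 := min_le_left _ _
    have hmc : m ≤ c i := min_le_right _ _
    have key : ∀ x ∈ Set.uIoc T (c i * T),
        ‖g1 i x‖ ≤ (|u i 0| / m ^ 2 + B i / L i / m) / T := by
      intro x hx
      obtain ⟨hx1, hx2⟩ := hx
      have hTm : T * m ≤ min T (c i * T) := by
        apply le_min
        · nlinarith
        · nlinarith
      have hxm : T * m < x := lt_of_le_of_lt hTm hx1
      have hx0 : 0 < x := lt_trans (by positivity) hxm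
      have h1 : |u i ⌊x / L i⌋₊| ≤ |u i 0| + (x / L i) * B i := by
        refine (hlin i _).trans ?_
        have hfl : (⌊x / L i⌋₊ : ℝ) ≤ x / L i := Nat.floor_le (div_nonneg hx0.le (hL i).le)
        nlinarith [hB0 i]
      have hnorm : ‖g1 i x‖ = |u i ⌊x / L i⌋₊| / x ^ 2 := by
        rw [hg1def]
        simp only
        rw [Real.norm_eq_abs, abs_div, abs_of_nonneg (by positivity : (0:ℝ) ≤ x ^ 2)]
      rw [hnorm]
      have step1 : |u i ⌊x / L i⌋₊| / x ^ 2 ≤ (|u i 0| + (x / L i) * B i) / x ^ 2 := by gcongr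
      have step2 : (|u i 0| + (x / L i) * B i) / x ^ 2 = |u i 0| / x ^ 2 + (B i / L i) / x := by
        field_simp [hx0.ne', (hL i).ne']
      have step3 : |u i 0| / x ^ 2 + (B i / L i) / x
          ≤ |u i 0| / (T * m) ^ 2 + (B i / L i) / (T * m) := by
        have hBL : 0 ≤ B i / L i := div_nonneg (hB0 i) (hL i).le
        gcongr <;> first
          | exact abs_nonneg _
          | exact hBL
          | exact hxm.le
          | positivity
      have step4 : |u i 0| / (T * m) ^ 2 + (B i / L i) / (T * m)
          ≤ (|u i 0| / m ^ 2 + B i / L i / m) / T := by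
        have e : (|u i 0| / m ^ 2 + B i / L i / m) / T
            = |u i 0| / (T * m ^ 2) + (B i / L i) / (T * m) := by
          field_simp [hT0.ne', hm.ne', (hL i).ne']
        rw [e]
        gcongr <;> first
          | exact abs_nonneg _
          | positivity
          | nlinarith
      linarith
    have hle := intervalIntegral.norm_integral_le_of_norm_le_const key
    rw [Real.norm_eq_abs] at hle
    refine hle.trans ?_
    have e1 : |c i * T - T| = |c i - 1| * T := by
      rw [show c i * T - T = (c i - 1) * T by ring, abs_mul, abs_of_pos hT0]
    refine le_of_eq ?_
    calc (|u i 0| / m ^ 2 + B i / L i / m) / T * |c i * T - T|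
        = (|u i 0| / m ^ 2 + B i / L i / m) / T * (|c i - 1| * T) := by rw [e1]
      _ = |c i - 1| * (|u i 0| / m ^ 2 + B i / L i / m) := by
          field_simp
      _ = K i := rfl
  -- lower bound for the integral
  set Lb : ℝ := ∑ i : Fin r, c i * ((∫ s in (1:ℝ)..(c i), g1 i s) - K i) with hLbdef
  have lower : ∀ T : ℝ, 1 ≤ T → Lb ≤ ∫ t in (1:ℝ)..T, gG t := by
    intro T hT
    have hT0 : (0:ℝ) < T := lt_of_lt_of_le one_pos hT
    have e1 : (∫ t in (1:ℝ)..T, gG t)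
        = ∑ i : Fin r, ((c i * ∫ t in (1:ℝ)..T, g1 i t) - ∫ t in (1:ℝ)..T, g2 i t) := by
      rw [hGsum]
      rw [intervalIntegral.integral_finset_sum
        (fun i _ => ((hint1 i one_pos hT0).const_mul (c i)).sub (hint2 i one_pos hT0))]
      refine Finset.sum_congr rfl fun i _ => ?_
      rw [intervalIntegral.integral_sub ((hint1 i one_pos hT0).const_mul (c i))
        (hint2 i one_pos hT0), intervalIntegral.integral_const_mul]
    rw [e1, hLbdef]
    refine Finset.sum_le_sum fun i _ => ?_
    rw [hsub i T]
    have e3 := hsplit i T hT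
    have e4 : c i * (∫ t in (1:ℝ)..T, g1 i t) - c i * ∫ s in (c i)..(c i * T), g1 i s
        = c i * ((∫ s in (1:ℝ)..(c i), g1 i s) - ∫ s in T..(c i * T), g1 i s) := by
      rw [← mul_sub, e3]
    rw [e4]
    have h5 := hbound i T hT
    refine mul_le_mul_of_nonneg_left ?_ (hc i).le
    have h7 := le_abs_self (∫ s in T..(c i * T), g1 i s)
    linarith
  -- upper bound for the integral
  set T₀ : ℝ := max T₁ 1 with hT₀def
  have hT₀1 : (1:ℝ) ≤ T₀ := le_max_right _ _
  have hT₀0 : (0:ℝ) < T₀ := lt_of_lt_of_le one_pos hT₀1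
  set J : ℝ := ∫ t in (1:ℝ)..T₀, gG t with hJdef
  have upper : ∀ T : ℝ, T₀ ≤ T → (∫ t in (1:ℝ)..T, gG t) ≤ J + a * Real.log (T / T₀) := by
    intro T hT
    have hT0 : (0:ℝ) < T := lt_of_lt_of_le hT₀0 hT
    have esplit := integral_add_adjacent_intervals (μ := volume) (f := gG)
      (hintG one_pos hT₀0) (hintG hT₀0 hT0)
    have hmono : (∫ t in T₀..T, gG t) ≤ ∫ t in T₀..T, a * t⁻¹ := by
      apply intervalIntegral.integral_mono_on hT (hintG hT₀0 hT0)
      · apply ContinuousOn.intervalIntegrable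
        apply ContinuousOn.mul continuousOn_const
        apply ContinuousOn.inv₀ continuousOn_id
        intro x hx
        rw [Set.uIcc_of_le hT] at hx
        have : (1:ℝ) ≤ x := le_trans hT₀1 hx.1
        exact (by linarith : x ≠ 0)
      · intro x hx
        have hx1 : T₀ ≤ x := hx.1
        have hx0 : (0:ℝ) < x := lt_of_lt_of_le hT₀0 hx1
        have hax : 1 / x * (∑ i : Fin r, (c i * u i ⌊x / L i⌋₊ - u i ⌊c i * x / L i⌋₊)) ≤ a :=
          hT₁ x (le_trans (le_max_left _ _) hx1)
        have hax' : (∑ i : Fin r, (c i * u i ⌊x / L i⌋₊ - u i ⌊c i * x / L i⌋₊)) / x ≤ a := by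
          rw [← one_div_mul_eq_div]
          exact hax
        show (∑ i : Fin r, (c i * u i ⌊x / L i⌋₊ - u i ⌊c i * x / L i⌋₊)) / x ^ 2 ≤ a * x⁻¹
        rw [← div_eq_mul_inv, pow_two, ← div_div]
        gcongr
    have hval : (∫ t in T₀..T, a * t⁻¹) = a * Real.log (T / T₀) := by
      rw [intervalIntegral.integral_const_mul, integral_inv]
      rw [Set.mem_uIcc]
      push_neg
      constructor <;> intro h <;> linarith
    linarith
  -- conclusion
  set M : ℝ := max ((Lb - J) / a + 1) 0 with hMdef
  have hM0 : 0 ≤ M := le_max_right _ _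
  set T : ℝ := T₀ * Real.exp M with hTdef
  have hTT₀ : T₀ ≤ T := le_mul_of_one_le_right hT₀0.le (Real.one_le_exp hM0)
  have hT1 : (1:ℝ) ≤ T := le_trans hT₀1 hTT₀
  have h1 := lower T hT1
  have h2 := upper T hTT₀
  have hlog : Real.log (T / T₀) = M := by
    rw [hTdef, mul_comm, mul_div_assoc, div_self hT₀0.ne', mul_one, Real.log_exp]
  rw [hlog] at h2
  have h3 : a * M ≤ Lb - J + a := by
    have h4 : (Lb - J) / a + 1 ≤ M := le_max_left _ _
    have h5 : a * M ≤ a * ((Lb - J) / a + 1) := mul_le_mul_of_nonpos_left h4 hneg.le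
    have h6 : a * ((Lb - J) / a + 1) = Lb - J + a := by
      rw [mul_add, mul_one, mul_comm a ((Lb - J) / a), div_mul_cancel₀ _ hneg.ne]
    linarith
  linarith
end

section
/- Let η_1, η_2, η_3, ... be independent identically distributed real-valued random variables with η_1 ∈ L². Then for any δ > 0 and m ∈ ℕ, ℙ( sup_{n ≥ m} | (Σ_{k=1}^n η_k)/n − 𝔼 η_1 | > δ ) ≤ 4 Var(η_1) / (δ² m). -/
open MeasureTheory ProbabilityTheory

/-!
Centre the variables, `ξ k = η k - 𝔼 η₀`, and let `S n = ξ 0 + ⋯ + ξ (n - 1)`, `σ² = Var η₀`.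
The partial sums of independent centred `L²` variables form a martingale, whose square is a
submartingale by conditional Jensen, so Doob's maximal inequality gives Kolmogorov's inequality
`ℙ(max_{n ≤ N} |S n| ≥ ε) ≤ N σ² / ε²`. On the dyadic block `m 2^j ≤ n < m 2^(j+1)` a deviation
`|S n| > δ n` forces `|S n| ≥ δ m 2^j`, so Kolmogorov bounds the block by `2 σ² / (δ² m) · 2^(-j)`,
and the geometric series sums to `4 σ² / (δ² m)`.
-/

theorem Nat.exists_mul_two_pow_le_lt {m n : ℕ} (hm : 0 < m) (hmn : m ≤ n) :
    ∃ j, m * 2 ^ j ≤ n ∧ n < m * 2 ^ (j + 1) := by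
  refine ⟨Nat.log 2 (n / m), ?_, ?_⟩
  · calc m * 2 ^ Nat.log 2 (n / m) ≤ m * (n / m) :=
          Nat.mul_le_mul_left m (Nat.pow_log_le_self 2 (Nat.div_pos hmn hm).ne')
      _ ≤ n := Nat.mul_div_le n m
  · rw [mul_comm, ← Nat.div_lt_iff_lt_mul hm]
    exact Nat.lt_pow_succ_log_self one_lt_two _

namespace MeasureTheory

variable {Ω : Type*} {m0 : MeasurableSpace Ω} {μ : Measure Ω}

theorem Martingale.submartingale_convex_comp [IsFiniteMeasure μ] {ℱ : Filtration ℕ m0}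
    {E : Type*} [NormedAddCommGroup E] [NormedSpace ℝ E] [CompleteSpace E]
    {M : ℕ → Ω → E} {φ : E → ℝ} (hM : Martingale M ℱ μ) (hφ : ConvexOn ℝ Set.univ φ)
    (hφc : Continuous φ) (hint : ∀ n, Integrable (φ ∘ M n) μ) :
    Submartingale (fun n => φ ∘ M n) ℱ μ := by
  refine submartingale_nat (fun n => hφc.comp_stronglyMeasurable (hM.stronglyAdapted n)) hint
    fun i => ?_
  filter_upwards [hM.condExp_ae_eq (Nat.le_succ i),
    hφ.map_condExp_le_univ (ℱ.le i) hφc.lowerSemicontinuous (hM.integrable (i + 1)) (hint (i + 1))]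
    with ω hcond hjensen
  simpa [hcond] using hjensen

theorem Martingale.measure_exists_le_abs_ge_le [IsFiniteMeasure μ] {ℱ : Filtration ℕ m0}
    {M : ℕ → Ω → ℝ} (hM : Martingale M ℱ μ) (hL2 : ∀ n, MemLp (M n) 2 μ) (N : ℕ) {ε : ℝ}
    (hε : 0 < ε) :
    μ {ω | ∃ k ≤ N, ε ≤ |M k ω|} ≤ ENNReal.ofReal ((∫ ω, M N ω ^ 2 ∂μ) / ε ^ 2) := by
  have hsub : Submartingale (fun n => (· ^ 2) ∘ M n) ℱ μ :=
    hM.submartingale_convex_comp even_two.convexOn_pow (continuous_pow 2)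
      fun n => (hL2 n).integrable_sq
  set D := {ω | ε ^ 2 ≤ (Finset.range (N + 1)).sup' Finset.nonempty_range_add_one
    fun k => M k ω ^ 2}
  have hdoob : ENNReal.ofReal (ε ^ 2) * μ D ≤ ENNReal.ofReal (∫ ω in D, M N ω ^ 2 ∂μ) := by
    rw [ENNReal.ofReal_eq_coe_nnreal (sq_nonneg ε)]
    exact maximal_ineq hsub (fun n ω => sq_nonneg (M n ω)) N
  have hsubset : {ω | ∃ k ≤ N, ε ≤ |M k ω|} ⊆ D := by
    rintro ω ⟨k, hk, hεk⟩
    refine (Finset.le_sup'_iff (f := fun k => M k ω ^ 2) _).2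
      ⟨k, Finset.mem_range_succ_iff.2 hk, ?_⟩
    simpa only [sq_abs] using pow_le_pow_left₀ hε.le hεk 2
  calc μ {ω | ∃ k ≤ N, ε ≤ |M k ω|} ≤ μ D := measure_mono hsubset
    _ ≤ ENNReal.ofReal (∫ ω in D, M N ω ^ 2 ∂μ) / ENNReal.ofReal (ε ^ 2) := by
      rw [ENNReal.le_div_iff_mul_le (by simp [hε.ne']) (by simp), mul_comm]
      exact hdoob
    _ ≤ ENNReal.ofReal ((∫ ω, M N ω ^ 2 ∂μ) / ε ^ 2) := by
      rw [ENNReal.ofReal_div_of_pos (by positivity)]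
      gcongr ?_ / _
      exact ENNReal.ofReal_le_ofReal <|
        setIntegral_le_integral (hL2 N).integrable_sq (.of_forall fun ω => sq_nonneg _)

theorem measure_exists_ge_mul_lt_abs_le {S : ℕ → Ω → ℝ} {σ2 δ : ℝ} {m : ℕ} (hσ2 : 0 ≤ σ2)
    (hδ : 0 < δ) (hm : 0 < m)
    (hmax : ∀ N : ℕ, ∀ ε : ℝ, 0 < ε →
      μ {ω | ∃ n ≤ N, ε ≤ |S n ω|} ≤ ENNReal.ofReal (N * σ2 / ε ^ 2)) :
    μ {ω | ∃ n, m ≤ n ∧ δ * n < |S n ω|} ≤ ENNReal.ofReal (4 * σ2 / (δ ^ 2 * m)) := by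
  set A : ℕ → Set Ω := fun j => {ω | ∃ n ≤ m * 2 ^ (j + 1), δ * (m * 2 ^ j) ≤ |S n ω|}
  have hcover : {ω | ∃ n, m ≤ n ∧ δ * n < |S n ω|} ⊆ ⋃ j, A j := by
    rintro ω ⟨n, hmn, hn⟩
    obtain ⟨j, hjn, hnj⟩ := Nat.exists_mul_two_pow_le_lt hm hmn
    have hjn' : (m : ℝ) * 2 ^ j ≤ n := by exact_mod_cast hjn
    exact Set.mem_iUnion.2 ⟨j, n, hnj.le, by nlinarith⟩
  have hA : ∀ j, μ (A j) ≤ ENNReal.ofReal (2 * σ2 / (δ ^ 2 * m) * (1 / 2) ^ j) := by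
    intro j
    refine (hmax _ _ (by positivity)).trans_eq (congrArg ENNReal.ofReal ?_)
    push_cast
    rw [one_div_pow]
    field_simp
    ring
  calc μ {ω | ∃ n, m ≤ n ∧ δ * n < |S n ω|} ≤ μ (⋃ j, A j) := measure_mono hcover
    _ ≤ ∑' j, μ (A j) := measure_iUnion_le A
    _ ≤ ∑' j, ENNReal.ofReal (2 * σ2 / (δ ^ 2 * m) * (1 / 2) ^ j) := ENNReal.tsum_le_tsum hA
    _ = ENNReal.ofReal (∑' j : ℕ, 2 * σ2 / (δ ^ 2 * m) * (1 / 2) ^ j) :=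
      (ENNReal.ofReal_tsum_of_nonneg (fun j => by positivity)
        (summable_geometric_two.mul_left _)).symm
    _ = ENNReal.ofReal (4 * σ2 / (δ ^ 2 * m)) := by
      rw [tsum_mul_left, tsum_geometric_two]
      ring_nf

end MeasureTheory

namespace ProbabilityTheory

variable {Ω : Type*} {m0 : MeasurableSpace Ω} {μ : Measure Ω}

theorem iIndepFun.martingale_sum_range_succ {E : Type*} [NormedAddCommGroup E]
    [NormedSpace ℝ E] [CompleteSpace E] [SecondCountableTopology E] [MeasurableSpace E]
    [BorelSpace E] {ξ : ℕ → Ω → E} (hind : iIndepFun ξ μ) (hsm : ∀ k, StronglyMeasurable (ξ k))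
    (hint : ∀ k, Integrable (ξ k) μ) (hmean : ∀ k, μ[ξ k] = 0) :
    Martingale (fun n => ∑ k ∈ Finset.range (n + 1), ξ k) (Filtration.natural ξ hsm) μ := by
  have := hind.isProbabilityMeasure
  refine martingale_of_condExp_sub_eq_zero_nat (fun n => ?_)
    (fun n => integrable_finsetSum' _ fun k _ => hint k) fun i => ?_
  · exact Finset.stronglyMeasurable_sum _ fun k hk =>
      (Filtration.stronglyAdapted_natural hsm k).mono
        (Filtration.mono _ (Finset.mem_range_succ_iff.1 hk))
  · rw [Finset.sum_range_succ _ (i + 1), add_sub_cancel_left]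
    simpa [hmean, Pi.zero_def] using hind.condExp_natural_ae_eq_of_lt hsm (Nat.lt_succ_self i)

theorem iIndepFun.measure_exists_le_abs_sum_ge_le {ξ : ℕ → Ω → ℝ} (hind : iIndepFun ξ μ)
    (hmeas : ∀ k, Measurable (ξ k)) (hL2 : ∀ k, MemLp (ξ k) 2 μ) (hmean : ∀ k, μ[ξ k] = 0)
    (N : ℕ) {ε : ℝ} (hε : 0 < ε) :
    μ {ω | ∃ n ≤ N, ε ≤ |∑ k ∈ Finset.range n, ξ k ω|} ≤
      ENNReal.ofReal ((∑ k ∈ Finset.range N, variance (ξ k) μ) / ε ^ 2) := by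
  have := hind.isProbabilityMeasure
  cases N with
  | zero => simp [hε.not_ge]
  | succ N =>
    set S : ℕ → Ω → ℝ := fun n => ∑ k ∈ Finset.range (n + 1), ξ k
    have hS : Martingale S _ μ := hind.martingale_sum_range_succ
      (fun k => (hmeas k).stronglyMeasurable) (fun k => (hL2 k).integrable one_le_two) hmean
    have hSL2 : ∀ n, MemLp (S n) 2 μ := fun n => memLp_finsetSum' _ fun k _ => hL2 k
    have hSmean : μ[S N] = 0 := by
      simp [S, integral_finsetSum _ fun k _ => (hL2 k).integrable one_le_two, hmean]
    have hvar : ∫ ω, S N ω ^ 2 ∂μ = ∑ k ∈ Finset.range (N + 1), variance (ξ k) μ := by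
      rw [← variance_of_integral_eq_zero (hSL2 N).aemeasurable hSmean]
      exact IndepFun.variance_sum (fun k _ => hL2 k) fun i _ j _ hij => hind.indepFun hij
    calc μ {ω | ∃ n ≤ N + 1, ε ≤ |∑ k ∈ Finset.range n, ξ k ω|}
        ≤ μ {ω | ∃ k ≤ N, ε ≤ |S k ω|} := by
          refine measure_mono ?_
          rintro ω ⟨_ | k, hk, hεk⟩
          · simp only [Finset.sum_range_zero, abs_zero] at hεk
            linarith
          · exact ⟨k, by omega, by simpa [S] using hεk⟩
      _ ≤ _ := hvar ▸ hS.measure_exists_le_abs_ge_le hSL2 N hε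

theorem iIndepFun.measure_exists_le_abs_sum_sub_integral_ge_le {η : ℕ → Ω → ℝ}
    (hind : iIndepFun η μ) (hmeas : ∀ k, Measurable (η k))
    (hident : ∀ k, IdentDistrib (η k) (η 0) μ μ) (hL2 : MemLp (η 0) 2 μ) (N : ℕ) {ε : ℝ}
    (hε : 0 < ε) :
    μ {ω | ∃ n ≤ N, ε ≤ |∑ k ∈ Finset.range n, (η k ω - μ[η 0])|} ≤
      ENNReal.ofReal (N * variance (η 0) μ / ε ^ 2) := by
  have := hind.isProbabilityMeasure
  set ξ : ℕ → Ω → ℝ := fun k ω => η k ω - μ[η 0]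
  have hidξ : ∀ k, IdentDistrib (ξ k) (ξ 0) μ μ := fun k =>
    (hident k).comp (measurable_sub_const _)
  have hL2ξ : ∀ k, MemLp (ξ k) 2 μ := fun k =>
    (hidξ k).symm.memLp_snd (hL2.sub (memLp_const _))
  have hmeanξ : ∀ k, μ[ξ k] = 0 := fun k => by
    rw [(hidξ k).integral_eq, integral_sub (hL2.integrable one_le_two) (integrable_const _)]
    simp
  have hvarξ : ∀ k, variance (ξ k) μ = variance (η 0) μ := fun k =>
    (hidξ k).variance_eq.trans (variance_sub_const hL2.aestronglyMeasurable _)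
  have hindξ : iIndepFun ξ μ := hind.comp _ fun _ => measurable_sub_const _
  simpa only [hvarξ, Finset.sum_const, Finset.card_range, nsmul_eq_mul] using
    hindξ.measure_exists_le_abs_sum_ge_le (fun k => (hmeas k).sub_const _) hL2ξ hmeanξ N hε

end ProbabilityTheory

theorem prob_sup_avg_deviation_le_general {Ω : Type*} [MeasureSpace Ω] (η : ℕ → Ω → ℝ)
    (hmeas : ∀ k, Measurable (η k))
    (hindep : iIndepFun η ℙ)
    (hident : ∀ k, Measure.map (η k) ℙ = Measure.map (η 0) ℙ)
    (hL2 : MemLp (η 0) 2 ℙ)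
    (δ : ℝ) (hδ : 0 < δ) (m : ℕ) (hm : 1 ≤ m) :
    ℙ {ω | ∃ n, m ≤ n ∧
        δ < |(∑ k ∈ Finset.range n, η k ω) / (n : ℝ) - ∫ x, η 0 x ∂ℙ|} ≤
      ENNReal.ofReal (4 * variance (η 0) ℙ / (δ ^ 2 * m)) := by
  have hident' : ∀ k, IdentDistrib (η k) (η 0) ℙ ℙ := fun k =>
    ⟨(hmeas k).aemeasurable, (hmeas 0).aemeasurable, hident k⟩
  refine (measure_mono ?_).trans (measure_exists_ge_mul_lt_abs_le (variance_nonneg _ _) hδ hm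
    (hindep.measure_exists_le_abs_sum_sub_integral_ge_le hmeas hident' hL2))
  rintro ω ⟨n, hmn, hdev⟩
  have hn : (0 : ℝ) < n := by exact_mod_cast hm.trans hmn
  have hsum : ∑ k ∈ Finset.range n, (η k ω - ℙ[η 0]) =
      n * ((∑ k ∈ Finset.range n, η k ω) / n - ℙ[η 0]) := by
    simp only [Finset.sum_sub_distrib, Finset.sum_const, Finset.card_range, nsmul_eq_mul]
    field_simp
  refine ⟨n, hmn, ?_⟩
  rw [hsum, abs_mul, abs_of_pos hn, mul_comm δ]
  exact mul_lt_mul_of_pos_left hdev hn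

/-- Maximal-type weak law estimate: for i.i.d. `η_k ∈ L²`, any `δ > 0` and `m ≥ 1`,
`ℙ( sup_{n ≥ m} |(Σ_{k=1}^n η_k)/n − 𝔼η_1| > δ ) ≤ 4 Var(η_1)/(δ² m)`. -/
theorem prob_sup_avg_deviation_le {Ω : Type*} [MeasureSpace Ω]
    [IsProbabilityMeasure (ℙ : Measure Ω)] (η : ℕ → Ω → ℝ)
    (hmeas : ∀ k, Measurable (η k))
    (hindep : iIndepFun η ℙ)
    (hident : ∀ k, Measure.map (η k) ℙ = Measure.map (η 0) ℙ)
    (hL2 : MemLp (η 0) 2 ℙ)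
    (δ : ℝ) (hδ : 0 < δ) (m : ℕ) (hm : 1 ≤ m) :
    ℙ {ω | ∃ n, m ≤ n ∧
        δ < |(∑ k ∈ Finset.range n, η k ω) / (n : ℝ) - ∫ x, η 0 x ∂ℙ|} ≤
      ENNReal.ofReal (4 * variance (η 0) ℙ / (δ ^ 2 * m)) :=
  prob_sup_avg_deviation_le_general η hmeas hindep hident hL2 δ hδ m hm
end

section
/- Let c, ε, s be positive constants with 6ε^c < 1. Let (X, d) be a compact metric space with a Borel probability measure μ. Suppose that for every x ∈ X there exists a Borel set A ⊆ X containing x with 0 < diam A < ε/6 and μ(A) ≥ (diam A)^s. Then the ε-scale Hausdorff dimension satisfies dim_H(X, d, ε) ≤ (1 + c)·s. -/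
open scoped Classical

open Metric MeasureTheory ENNReal

/-- The `ε`-scale `s`-dimensional Hausdorff quantity
`ℋ^s_ε(X,d) = inf { Σ_i (diam E_i)^s : X = ∪_i E_i, diam E_i < ε }`,
with the conventions `(diam ∅)^s = 0` and `0^0 = 1` (via `Real.rpow`). -/
noncomputable def scaleHausdorff (X : Type*) [MetricSpace X] (s ε : ℝ) : ℝ≥0∞ :=
  ⨅ (E : ℕ → Set X) (_ : (⋃ i, E i) = Set.univ) (_ : ∀ i, Metric.diam (E i) < ε),
    ∑' i, (if E i = ∅ then 0 else ENNReal.ofReal (Metric.diam (E i) ^ s))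

/-- The `ε`-scale Hausdorff dimension `dim_H(X,d,ε) = sup{ s ≥ 0 : ℋ^s_ε(X,d) ≥ 1 }`. -/
noncomputable def scaleDimH (X : Type*) [MetricSpace X] (ε : ℝ) : ℝ :=
  sSup {s : ℝ | 0 ≤ s ∧ 1 ≤ scaleHausdorff X s ε}

/-!
By the Vitali covering lemma, the sets `A x` contain a disjoint subfamily `(A b)_{b ∈ u}` whose
closed `2 diam (A b)`-thickenings cover `X`; being disjoint and of positive measure, the `A b` are
countably many. The thickenings have diameter at most `6 diam (A b) < ε`, so for `t ≥ s` they
give `ℋ^t_ε(X) ≤ Σ (6 diam A_b)^t ≤ 6^s ε^(t-s) Σ μ(A_b) ≤ 6^s ε^(t-s)`, and for `t > (1+c)s`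
this is at most `(6 ε^c)^s < 1`.
-/

open Set Bornology

theorem isBounded_of_diam_pos {X : Type*} [PseudoMetricSpace X] {s : Set X}
    (h : 0 < diam s) : IsBounded s :=
  by_contra fun hs => h.ne' (diam_eq_zero_of_unbounded hs)

theorem Set.PairwiseDisjoint.countable_of_measure_pos {X ι : Type*} [MeasurableSpace X]
    {μ : Measure X} [SFinite μ] {u : Set ι} {A : ι → Set X} (hd : u.PairwiseDisjoint A)
    (hm : ∀ i ∈ u, MeasurableSet (A i)) (hpos : ∀ i ∈ u, 0 < μ (A i)) : u.Countable := by
  have hcount := Measure.countable_meas_pos_of_disjoint_iUnion (μ := μ)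
    (As := fun i : u => A i) (fun i => hm i i.2) ((pairwise_subtype_iff_pairwise_set u _).2 hd)
  have hall : {i : u | 0 < μ (A i)} = univ := eq_univ_of_forall fun i => hpos i i.2
  rw [hall, countable_univ_iff] at hcount
  exact countable_coe_iff.1 hcount

theorem exists_pairwiseDisjoint_iUnion_cthickening_eq_univ {X : Type*} [MetricSpace X]
    (A : X → Set X) (hxA : ∀ x, x ∈ A x) (hbdd : ∀ x, IsBounded (A x)) {R : ℝ}
    (hR : ∀ x, diam (A x) ≤ R) :
    ∃ u : Set X, u.PairwiseDisjoint A ∧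
      ⋃ b : u, cthickening (2 * diam (A b)) (A b) = univ := by
  obtain ⟨u, -, hdisj, hcov⟩ := Vitali.exists_disjoint_subfamily_covering_enlargement A univ
    (fun x => diam (A x)) 2 one_lt_two (fun _ _ => diam_nonneg) R (fun x _ => hR x)
    (fun x _ => ⟨x, hxA x⟩)
  refine ⟨u, hdisj, eq_univ_of_forall fun x => ?_⟩
  obtain ⟨b, hbu, ⟨y, hyx, hyb⟩, hle⟩ := hcov x (mem_univ x)
  exact mem_iUnion.2 ⟨⟨b, hbu⟩, mem_cthickening_of_dist_le x y _ _ hyb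
    ((dist_le_diam_of_mem (hbdd x) (hxA x) hyx).trans hle)⟩

theorem scaleHausdorff_le_tsum {X ι : Type*} [MetricSpace X] [Countable ι] {s ε : ℝ}
    (hε : 0 < ε) (F : ι → Set X) (hcover : ⋃ i, F i = univ) (hdiam : ∀ i, diam (F i) < ε) :
    scaleHausdorff X s ε ≤ ∑' i, (if F i = ∅ then 0 else ENNReal.ofReal (diam (F i) ^ s)) := by
  have := Encodable.ofCountable ι
  let m : Set X → ℝ≥0∞ := fun E => if E = ∅ then 0 else ENNReal.ofReal (diam E ^ s)
  calc scaleHausdorff X s ε ≤ ∑' n, m (⋃ i ∈ Encodable.decode₂ ι n, F i) :=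
        iInf_le_of_le _ <| iInf_le_of_le (by rw [Encodable.iUnion_decode₂, hcover]) <|
          iInf_le _ fun n => Encodable.iUnion_decode₂_cases (by simpa using hε) hdiam
    _ = ∑' i, m (F i) := tsum_iUnion_decode₂ m (if_pos rfl) F

theorem rpow_le_mul_rpow_sub_mul_rpow {D d K ε s t : ℝ} (hD : 0 ≤ D) (hd : 0 < d) (hK : 0 < K)
    (hDd : D ≤ K * d) (hdε : K * d ≤ ε) (ht : 0 ≤ t) (hst : s ≤ t) :
    D ^ t ≤ K ^ s * ε ^ (t - s) * d ^ s :=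
  calc D ^ t ≤ (K * d) ^ t := Real.rpow_le_rpow hD hDd ht
    _ = (K * d) ^ (t - s) * (K ^ s * d ^ s) := by
        rw [← Real.mul_rpow hK.le hd.le, ← Real.rpow_add (by positivity), sub_add_cancel]
    _ ≤ ε ^ (t - s) * (K ^ s * d ^ s) :=
        mul_le_mul_of_nonneg_right
          (Real.rpow_le_rpow (by positivity) hdε (sub_nonneg.2 hst)) (by positivity)
    _ = K ^ s * ε ^ (t - s) * d ^ s := by ring

theorem scaleHausdorff_le_of_forall_measure_ge {X : Type*} [MetricSpace X] [MeasurableSpace X]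
    (μ : Measure X) [SFinite μ] {ε s t : ℝ} (hε : 0 < ε) (ht : 0 ≤ t) (hst : s ≤ t)
    (hA : ∀ x : X, ∃ A : Set X, MeasurableSet A ∧ x ∈ A ∧
      0 < diam A ∧ diam A < ε / 6 ∧ ENNReal.ofReal (diam A ^ s) ≤ μ A) :
    scaleHausdorff X t ε ≤ ENNReal.ofReal (6 ^ s * ε ^ (t - s)) * μ univ := by
  choose A hAm hxA hApos hAε hAμ using hA
  obtain ⟨u, hdisj, hcover⟩ := exists_pairwiseDisjoint_iUnion_cthickening_eq_univ A hxA
    (fun x => isBounded_of_diam_pos (hApos x)) (fun x => (hAε x).le)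
  have hu : u.Countable := hdisj.countable_of_measure_pos (fun x _ => hAm x) fun x _ =>
    (ENNReal.ofReal_pos.2 (Real.rpow_pos_of_pos (hApos x) s)).trans_le (hAμ x)
  have := hu.to_subtype
  set C : X → Set X := fun x => cthickening (2 * diam (A x)) (A x)
  have hdiamC (x : X) : diam (C x) ≤ 6 * diam (A x) := by
    have := diam_cthickening_le (A x) (by linarith [hApos x] : 0 ≤ 2 * diam (A x))
    linarith [hApos x]
  have hterm (x : X) :
      (if C x = ∅ then 0 else ENNReal.ofReal (diam (C x) ^ t)) ≤
        ENNReal.ofReal (6 ^ s * ε ^ (t - s)) * μ (A x) := by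
    split_ifs
    · exact bot_le
    calc ENNReal.ofReal (diam (C x) ^ t)
        ≤ ENNReal.ofReal (6 ^ s * ε ^ (t - s) * diam (A x) ^ s) :=
          ENNReal.ofReal_le_ofReal <| rpow_le_mul_rpow_sub_mul_rpow diam_nonneg (hApos x)
            (by norm_num) (hdiamC x) (by linarith [hAε x]) ht hst
      _ ≤ ENNReal.ofReal (6 ^ s * ε ^ (t - s)) * μ (A x) := by
          rw [ENNReal.ofReal_mul (by positivity)]
          gcongr
          exact hAμ x
  calc scaleHausdorff X t ε
      ≤ ∑' b : u, (if C b = ∅ then 0 else ENNReal.ofReal (diam (C b) ^ t)) :=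
        scaleHausdorff_le_tsum hε _ hcover fun b => (hdiamC b).trans_lt (by linarith [hAε b])
    _ ≤ ∑' b : u, ENNReal.ofReal (6 ^ s * ε ^ (t - s)) * μ (A b) :=
        ENNReal.tsum_le_tsum fun b => hterm b
    _ = ENNReal.ofReal (6 ^ s * ε ^ (t - s)) * μ (⋃ b ∈ u, A b) := by
        rw [ENNReal.tsum_mul_left, measure_biUnion hu hdisj fun b _ => hAm b]
    _ ≤ ENNReal.ofReal (6 ^ s * ε ^ (t - s)) * μ univ := by gcongr; exact subset_univ _

theorem six_rpow_mul_rpow_sub_lt_one {c ε s t : ℝ} (hc : 0 < c) (hε : 0 < ε) (hs : 0 < s)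
    (h6 : 6 * ε ^ c < 1) (ht : (1 + c) * s < t) : 6 ^ s * ε ^ (t - s) < 1 := by
  have hε1 : ε < 1 := by
    by_contra! h
    linarith [Real.one_le_rpow h hc.le]
  calc 6 ^ s * ε ^ (t - s) ≤ 6 ^ s * ε ^ (c * s) :=
        mul_le_mul_of_nonneg_left
          (Real.rpow_le_rpow_of_exponent_ge hε hε1.le (by linarith)) (by positivity)
    _ = (6 * ε ^ c) ^ s := by
        rw [Real.mul_rpow (by norm_num) (by positivity), Real.rpow_mul hε.le]
    _ < 1 := Real.rpow_lt_one (by positivity) h6 hs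

theorem scaleDimH_le_of_scaleHausdorff_lt_one {X : Type*} [MetricSpace X] {ε a : ℝ}
    (ha : 0 ≤ a) (h : ∀ t, a < t → scaleHausdorff X t ε < 1) : scaleDimH X ε ≤ a :=
  Real.sSup_le (fun t ⟨_, ht⟩ => le_of_not_gt fun hat => (h t hat).not_ge ht) ha

theorem scaleDimH_le_of_measure_lower_bound_general (X : Type*) [MetricSpace X]
    [MeasurableSpace X] (μ : Measure X) [IsProbabilityMeasure μ]
    (c ε s : ℝ) (hc : 0 < c) (hε : 0 < ε) (hs : 0 < s)
    (h6 : 6 * ε ^ c < 1)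
    (hA : ∀ x : X, ∃ A : Set X, MeasurableSet A ∧ x ∈ A ∧
      0 < Metric.diam A ∧ Metric.diam A < ε / 6 ∧
      ENNReal.ofReal (Metric.diam A ^ s) ≤ μ A) :
    scaleDimH X ε ≤ (1 + c) * s := by
  refine scaleDimH_le_of_scaleHausdorff_lt_one (by positivity) fun t ht => ?_
  have hst : s ≤ t := by nlinarith
  calc scaleHausdorff X t ε ≤ ENNReal.ofReal (6 ^ s * ε ^ (t - s)) * μ univ :=
        scaleHausdorff_le_of_forall_measure_ge μ hε (hs.le.trans hst) hst hA
    _ = ENNReal.ofReal (6 ^ s * ε ^ (t - s)) := by rw [measure_univ, mul_one]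
    _ < 1 := ENNReal.ofReal_lt_one.2 (six_rpow_mul_rpow_sub_lt_one hc hε hs h6 ht)

/-- Tsukamoto's geometric measure theory lemma: if `6 ε^c < 1` and every point of a
compact metric space `X` with Borel probability measure `μ` lies in a Borel set `A`
with `0 < diam A < ε/6` and `μ(A) ≥ (diam A)^s`, then `dim_H(X,d,ε) ≤ (1+c)s`. -/
theorem scaleDimH_le_of_measure_lower_bound (X : Type*) [MetricSpace X] [CompactSpace X]
    [MeasurableSpace X] [BorelSpace X] (μ : Measure X) [IsProbabilityMeasure μ]
    (c ε s : ℝ) (hc : 0 < c) (hε : 0 < ε) (hs : 0 < s)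
    (h6 : 6 * ε ^ c < 1)
    (hA : ∀ x : X, ∃ A : Set X, MeasurableSet A ∧ x ∈ A ∧
      0 < Metric.diam A ∧ Metric.diam A < ε / 6 ∧
      ENNReal.ofReal (Metric.diam A ^ s) ≤ μ A) :
    scaleDimH X ε ≤ (1 + c) * s :=
  scaleDimH_le_of_measure_lower_bound_general X μ c ε s hc hε hs h6 hA
end

section
/- Let r ∈ ℕ and let 0 < c_i, ĉ_i ≤ 1 for 1 ≤ i ≤ r. For any positive constants δ and C there exists M_0 ∈ ℕ (depending only on the c_i, ĉ_i, C, δ) such that: whenever ξ_{11},...,ξ_{1r}, ξ_{21},...,ξ_{2r}, ... are i.i.d. real random variables with ξ_{11} ∈ L² and max{|𝔼ξ_{11}|, Var ξ_{11}} ≤ C, then ℙ( sup_{M ≥ M_0} Σ_{i=1}^r | (Σ_{k=1}^{⌊c_i M⌋} ξ_{ki})/(c_i M) − (Σ_{k=1}^{⌊ĉ_i M⌋} ξ_{ki})/(ĉ_i M) | ≤ δ ) ≥ 1/2. -/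
/-!
Centre every column at the common mean `m`. Kolmogorov's maximal inequality (Doob's inequality
for the submartingale `S_n²`) bounds the probability that `|S_n - n m| > α n` for some `n` in the
dyadic block `[2^j, 2^(j+1))` by `O(C / (α² 2^j))`. Summing over `j ≥ j₀` and over the `r`
columns, with probability at least `1/2` every column satisfies `|S_n - n m| ≤ α n` for all
`n ≥ 2^j₀`, where `j₀` depends only on `r, C, δ`. On that event each normalised sum
`S(⌊b M⌋) / (b M)` lies within `2α` of `m` once `b M` is large, so the sum over the `r` columns of
the differences is at most `4 r α = δ`.
-/

open MeasureTheory ProbabilityTheory Finset Filter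
open scoped ENNReal

namespace ProbabilityTheory

variable {Ω : Type*} {mΩ : MeasurableSpace Ω} {μ : Measure Ω} [IsProbabilityMeasure μ]
  {X : ℕ → Ω → ℝ}

theorem iIndepFun.submartingale_sq_sum_range_succ (hX : iIndepFun X μ)
    (hmeas : ∀ k, Measurable (X k)) (hL2 : ∀ k, MemLp (X k) 2 μ) (hmean : ∀ k, μ[X k] = 0) :
    Submartingale (fun n ω => (∑ k ∈ range (n + 1), X k ω) ^ 2)
      (Filtration.natural X fun k => (hmeas k).stronglyMeasurable) μ := by
  set ℱ := Filtration.natural X fun k => (hmeas k).stronglyMeasurable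
  set S : ℕ → Ω → ℝ := fun n ω => ∑ k ∈ range (n + 1), X k ω
  have hS_adapted : StronglyAdapted ℱ S := fun n =>
    Finset.stronglyMeasurable_fun_sum _ fun k hk =>
      (Filtration.stronglyAdapted_natural _ k).mono (ℱ.mono (Nat.lt_succ_iff.1 (mem_range.1 hk)))
  have hS_L2 : ∀ n, MemLp (S n) 2 μ := fun n => memLp_finsetSum _ fun k _ => hL2 k
  refine submartingale_of_setIntegral_le_succ (fun n => (hS_adapted n).pow 2)
    (fun n => (hS_L2 n).integrable_sq) fun n s hs => ?_
  have hcross_int : Integrable (fun ω => S n ω * X (n + 1) ω) μ :=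
    (hS_L2 n).integrable_mul (hL2 (n + 1))
  have hindep : IndepFun (s.indicator (S n)) (X (n + 1)) μ := by
    rw [IndepFun_iff_Indep]
    exact indep_of_indep_of_le_left
      (hX.indep_comap_natural_of_lt (fun k => (hmeas k).stronglyMeasurable) n.lt_succ_self).symm
      ((hS_adapted n).measurable.indicator hs).comap_le
  have hcross : ∫ ω in s, S n ω * X (n + 1) ω ∂μ = 0 := by
    rw [← integral_indicator (ℱ.le n s hs)]
    simp_rw [Set.indicator_mul_left]
    rw [hindep.integral_fun_mul_eq_mul_integral
      (((hS_L2 n).integrable one_le_two).indicator (ℱ.le n s hs)).aestronglyMeasurable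
      (hL2 (n + 1)).aestronglyMeasurable, hmean, mul_zero]
  calc ∫ ω in s, S n ω ^ 2 ∂μ
      = ∫ ω in s, (S n ω ^ 2 + 2 * (S n ω * X (n + 1) ω)) ∂μ := by
        rw [integral_add (hS_L2 n).integrable_sq.integrableOn (hcross_int.integrableOn.const_mul 2),
          integral_const_mul, hcross, mul_zero, add_zero]
    _ ≤ ∫ ω in s, S (n + 1) ω ^ 2 ∂μ := by
        refine setIntegral_mono ((hS_L2 n).integrable_sq.integrableOn.add
          (hcross_int.integrableOn.const_mul 2)) (hS_L2 (n + 1)).integrable_sq.integrableOn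
          fun ω => ?_
        simp only [S, sum_range_succ _ (n + 1)]
        nlinarith [sq_nonneg (X (n + 1) ω)]

theorem iIndepFun.measure_exists_le_abs_sum_range_le (hX : iIndepFun X μ)
    (hmeas : ∀ k, Measurable (X k)) (hL2 : ∀ k, MemLp (X k) 2 μ) (hmean : ∀ k, μ[X k] = 0)
    (n : ℕ) {ε : ℝ} (hε : 0 < ε) :
    μ {ω | ∃ m ≤ n, ε ≤ |∑ k ∈ range (m + 1), X k ω|} ≤
      ENNReal.ofReal ((∑ k ∈ range (n + 1), Var[X k; μ]) / ε ^ 2) := by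
  set S : ℕ → Ω → ℝ := fun n ω => ∑ k ∈ range (n + 1), X k ω
  have hS_L2 : MemLp (S n) 2 μ := memLp_finsetSum _ fun k _ => hL2 k
  have hevent : {ω | ∃ m ≤ n, ε ≤ |S m ω|} = {ω | ((ε ^ 2).toNNReal : ℝ) ≤
      (range (n + 1)).sup' nonempty_range_add_one fun m => S m ω ^ 2} := by
    ext ω
    simp [Finset.le_sup'_iff, sq_le_sq, abs_of_pos hε, sq_nonneg]
  have hvar : ∫ ω, S n ω ^ 2 ∂μ = ∑ k ∈ range (n + 1), Var[X k; μ] := by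
    have hsum : S n = ∑ k ∈ range (n + 1), X k := by ext ω; simp [S]
    have hS_mean : μ[S n] = 0 := by
      simp [S, integral_finsetSum _ fun k _ => (hL2 k).integrable one_le_two, hmean]
    rw [← variance_of_integral_eq_zero hS_L2.aemeasurable hS_mean, hsum,
      IndepFun.variance_sum (fun k _ => hL2 k) fun i _ j _ hij => hX.indepFun hij]
  have hdoob := maximal_ineq (hX.submartingale_sq_sum_range_succ hmeas hL2 hmean)
    (fun m ω => sq_nonneg _) (ε := (ε ^ 2).toNNReal) n
  rw [← hevent] at hdoob
  change μ {ω | ∃ m ≤ n, ε ≤ |S m ω|} ≤ _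
  rw [ENNReal.ofReal_div_of_pos (by positivity), ENNReal.le_div_iff_mul_le (by simp [hε.ne'])
    (by simp), mul_comm]
  refine hdoob.trans (ENNReal.ofReal_le_ofReal ?_)
  rw [← hvar]
  exact setIntegral_le_integral hS_L2.integrable_sq (ae_of_all _ fun ω => sq_nonneg _)

theorem iIndepFun.measure_exists_le_two_pow_abs_sum_range_ge_le (hX : iIndepFun X μ)
    (hmeas : ∀ k, Measurable (X k)) (hL2 : ∀ k, MemLp (X k) 2 μ) (hmean : ∀ k, μ[X k] = 0)
    {C α : ℝ} (hvar : ∀ k, Var[X k; μ] ≤ C) (hα : 0 < α) (j : ℕ) :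
    μ {ω | ∃ m ≤ 2 ^ (j + 1), α * 2 ^ j ≤ |∑ k ∈ range (m + 1), X k ω|} ≤
      ENNReal.ofReal (4 * C / (α ^ 2 * 2 ^ j)) := by
  refine (hX.measure_exists_le_abs_sum_range_le hmeas hL2 hmean _ (by positivity)).trans
    (ENNReal.ofReal_le_ofReal ?_)
  have hC : 0 ≤ C := (variance_nonneg _ _).trans (hvar 0)
  have hsum : ∑ k ∈ range (2 ^ (j + 1) + 1), Var[X k; μ] ≤ 4 * 2 ^ j * C := by
    calc ∑ k ∈ range (2 ^ (j + 1) + 1), Var[X k; μ] ≤ (2 ^ (j + 1) + 1 : ℕ) * C := by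
          simpa using sum_le_card_nsmul (range (2 ^ (j + 1) + 1)) _ _ fun k _ => hvar k
      _ ≤ 4 * 2 ^ j * C := by
          gcongr
          push_cast
          linarith [pow_succ (2 : ℝ) j, one_le_pow₀ (one_le_two : (1 : ℝ) ≤ 2) (n := j)]
  calc (∑ k ∈ range (2 ^ (j + 1) + 1), Var[X k; μ]) / (α * 2 ^ j) ^ 2
      ≤ 4 * 2 ^ j * C / (α * 2 ^ j) ^ 2 := by gcongr
    _ = 4 * C / (α ^ 2 * 2 ^ j) := by field_simp

theorem iIndepFun.measure_exists_two_pow_le_abs_sum_range_sub_gt_le (hX : iIndepFun X μ)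
    (hmeas : ∀ k, Measurable (X k)) (hL2 : ∀ k, MemLp (X k) 2 μ) {m C α : ℝ}
    (hmean : ∀ k, μ[X k] = m) (hvar : ∀ k, Var[X k; μ] ≤ C) (hα : 0 < α) (j₀ : ℕ) :
    μ {ω | ∃ n, 2 ^ j₀ ≤ n ∧ α * n < |∑ k ∈ range n, X k ω - n * m|} ≤
      ENNReal.ofReal (8 * C / (α ^ 2 * 2 ^ j₀)) := by
  set Y : ℕ → Ω → ℝ := fun k ω => X k ω - m
  have hY := hX.comp (fun _ x => x - m) fun _ => measurable_id.sub_const m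
  have hY_L2 : ∀ k, MemLp (Y k) 2 μ := fun k => (hL2 k).sub (memLp_const m)
  have hY_mean : ∀ k, μ[Y k] = 0 := fun k => by
    simp [Y, integral_sub ((hL2 k).integrable one_le_two) (integrable_const m), hmean]
  have hY_var : ∀ k, Var[Y k; μ] ≤ C := fun k => by
    simpa [Y, variance_sub_const (hL2 k).aestronglyMeasurable] using hvar k
  have hblock := hY.measure_exists_le_two_pow_abs_sum_range_ge_le
    (fun k => (hmeas k).sub_const m) hY_L2 hY_mean hY_var hα
  have hcover : {ω | ∃ n, 2 ^ j₀ ≤ n ∧ α * n < |∑ k ∈ range n, X k ω - n * m|} ⊆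
      ⋃ i, {ω | ∃ l ≤ 2 ^ (j₀ + i + 1), α * 2 ^ (j₀ + i) ≤ |∑ k ∈ range (l + 1), Y k ω|} := by
    rintro ω ⟨n, hn, hlarge⟩
    have hn0 : n ≠ 0 := (Nat.two_pow_pos j₀).trans_le hn |>.ne'
    obtain ⟨i, hi⟩ : ∃ i, Nat.log 2 n = j₀ + i :=
      Nat.exists_eq_add_of_le (Nat.le_log_of_pow_le one_lt_two hn)
    refine Set.mem_iUnion.2 ⟨i, n - 1, ?_, ?_⟩
    · have := Nat.lt_pow_succ_log_self one_lt_two n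
      rw [hi] at this
      omega
    · have hpow : (2 : ℝ) ^ (j₀ + i) ≤ n := by
        rw [← hi]; exact_mod_cast Nat.pow_log_le_self 2 hn0
      rw [Nat.sub_add_cancel (Nat.one_le_iff_ne_zero.2 hn0)]
      simp only [Y, sum_sub_distrib, sum_const, card_range, nsmul_eq_mul]
      nlinarith
  calc _ ≤ ∑' i, μ {ω | ∃ l ≤ 2 ^ (j₀ + i + 1), α * 2 ^ (j₀ + i) ≤ |∑ k ∈ range (l + 1), Y k ω|} :=
        (measure_mono hcover).trans (measure_iUnion_le _)
    _ ≤ ∑' i, ENNReal.ofReal (8 * C / (α ^ 2 * 2 ^ j₀) / 2 / 2 ^ i) := by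
        refine ENNReal.tsum_le_tsum fun i => (hblock (j₀ + i)).trans_eq ?_
        congr 1
        field_simp
        ring
    _ = ENNReal.ofReal (8 * C / (α ^ 2 * 2 ^ j₀)) := by
        have hC : 0 ≤ C := (variance_nonneg _ _).trans (hvar 0)
        rw [← ENNReal.ofReal_tsum_of_nonneg (fun i => by positivity) (summable_geometric_two' _),
          tsum_geometric_two']

theorem iIndepFun.measure_exists_column_two_pow_le_abs_sum_range_sub_gt_le {ι : Type*}
    [Fintype ι] {ξ : ℕ × ι → Ω → ℝ} (hξ : iIndepFun ξ μ) (hmeas : ∀ p, Measurable (ξ p))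
    {p₀ : ℕ × ι} (hmap : ∀ p, μ.map (ξ p) = μ.map (ξ p₀)) (hL2 : MemLp (ξ p₀) 2 μ) {C α : ℝ}
    (hvar : Var[ξ p₀; μ] ≤ C) (hα : 0 < α) (j₀ : ℕ) :
    μ {ω | ∃ i n, 2 ^ j₀ ≤ n ∧ α * n < |∑ k ∈ range n, ξ (k, i) ω - n * μ[ξ p₀]|} ≤
      ENNReal.ofReal (Fintype.card ι * (8 * C / (α ^ 2 * 2 ^ j₀))) := by
  have hid : ∀ p, IdentDistrib (ξ p₀) (ξ p) μ μ := fun p =>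
    ⟨(hmeas p₀).aemeasurable, (hmeas p).aemeasurable, (hmap p).symm⟩
  have hcol (i : ι) := (hξ.precomp (g := fun k => (k, i)) fun _ _ h => (Prod.ext_iff.1 h).1
    ).measure_exists_two_pow_le_abs_sum_range_sub_gt_le (fun k => hmeas _)
    (fun k => (hid _).memLp_snd hL2) (fun k => (hid _).integral_eq.symm)
    (fun k => (hid _).variance_eq.symm.le.trans hvar) hα j₀
  rw [Set.ofPred_exists]
  calc _ ≤ ∑ i, _ := measure_iUnion_fintype_le _ _
    _ ≤ ∑ _i : ι, ENNReal.ofReal (8 * C / (α ^ 2 * 2 ^ j₀)) := sum_le_sum fun i _ => hcol i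
    _ = _ := by simp [ENNReal.ofReal_mul]

end ProbabilityTheory

theorem abs_sum_range_floor_div_sub_le {x : ℕ → ℝ} {m α b : ℝ} {N : ℕ}
    (hx : ∀ n, N ≤ n → |∑ k ∈ range n, x k - n * m| ≤ α * n) (hN : 0 < N) (hNb : N ≤ b)
    (hm : |m| ≤ α * b) :
    |(∑ k ∈ range ⌊b⌋₊, x k) / b - m| ≤ 2 * α := by
  have hb : 0 < b := (Nat.cast_pos.2 hN).trans_le hNb
  set n := ⌊b⌋₊
  have hnb : (n : ℝ) ≤ b := Nat.floor_le hb.le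
  have hbn : b < n + 1 := Nat.lt_floor_add_one b
  have hT := hx n (Nat.le_floor hNb)
  have hdecomp :
      (∑ k ∈ range n, x k) / b - m = ((∑ k ∈ range n, x k - n * m) - (b - n) * m) / b := by
    field_simp
    ring
  rw [hdecomp, abs_div, abs_of_pos hb, div_le_iff₀ hb]
  calc |(∑ k ∈ range n, x k - n * m) - (b - n) * m|
      ≤ |∑ k ∈ range n, x k - n * m| + (b - n) * |m| := by
        rw [← abs_of_nonneg (sub_nonneg.2 hnb), ← abs_mul, abs_of_nonneg (sub_nonneg.2 hnb)]
        exact abs_sub _ _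
    _ ≤ α * n + 1 * |m| := by gcongr; linarith
    _ ≤ 2 * α * b := by nlinarith [abs_nonneg m]

theorem abs_sum_range_floor_div_sub_sum_range_floor_div_le {x : ℕ → ℝ} {m α b b' : ℝ} {N : ℕ}
    (hx : ∀ n, N ≤ n → |∑ k ∈ range n, x k - n * m| ≤ α * n)
    (hN : 0 < N) (hNb : N ≤ b) (hmb : |m| ≤ α * b) (hNb' : N ≤ b') (hmb' : |m| ≤ α * b') :
    |(∑ k ∈ range ⌊b⌋₊, x k) / b - (∑ k ∈ range ⌊b'⌋₊, x k) / b'| ≤ 4 * α := by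
  have h := abs_sum_range_floor_div_sub_le hx hN hNb hmb
  have h' := abs_sum_range_floor_div_sub_le hx hN hNb' hmb'
  rw [abs_le] at h h' ⊢
  constructor <;> linarith

theorem MeasureTheory.one_sub_le_prob_compl {Ω : Type*} {mΩ : MeasurableSpace Ω} {μ : Measure Ω}
    [IsProbabilityMeasure μ] (s : Set Ω) : 1 - μ s ≤ μ sᶜ :=
  tsub_le_iff_left.2 (measure_univ (μ := μ) ▸ measure_univ_le_add_compl s)

theorem eventually_le_mul_natCast {a : ℝ} (ha : 0 < a) (B : ℝ) :
    ∀ᶠ M : ℕ in atTop, B ≤ a * M :=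
  (tendsto_natCast_atTop_atTop.const_mul_atTop ha).eventually_ge_atTop B

theorem exists_M0_avg_comparison_general (r : ℕ) (hr : 0 < r) (c c' : Fin r → ℝ)
    (hc : ∀ i, 0 < c i ∧ c i ≤ 1) (hc' : ∀ i, 0 < c' i ∧ c' i ≤ 1)
    (δ C : ℝ) (hδ : 0 < δ) :
    ∃ M₀ : ℕ, 0 < M₀ ∧
      ∀ (Ω : Type) (_ : MeasureSpace Ω) (_ : IsProbabilityMeasure (ℙ : Measure Ω))
        (ξ : ℕ × Fin r → Ω → ℝ),
        (∀ p, Measurable (ξ p)) →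
        iIndepFun ξ ℙ →
        (∀ p, Measure.map (ξ p) ℙ = Measure.map (ξ (0, ⟨0, hr⟩)) ℙ) →
        MemLp (ξ (0, ⟨0, hr⟩)) 2 ℙ →
        |∫ ω, ξ (0, ⟨0, hr⟩) ω ∂ℙ| ≤ C →
        variance (ξ (0, ⟨0, hr⟩)) ℙ ≤ C →
        ENNReal.ofReal (1 / 2) ≤
          ℙ {ω | ∀ M : ℕ, M₀ ≤ M →
            ∑ i : Fin r,
              |(∑ k ∈ Finset.range ⌊c i * M⌋₊, ξ (k, i) ω) / (c i * M) -
                (∑ k ∈ Finset.range ⌊c' i * M⌋₊, ξ (k, i) ω) / (c' i * M)| ≤ δ} := by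
  have hr' : (0 : ℝ) < r := Nat.cast_pos.2 hr
  set α := δ / (4 * r)
  have hα : 0 < α := by positivity
  obtain ⟨j₀, hj₀⟩ : ∃ j₀ : ℕ, 16 * r * C / α ^ 2 < 2 ^ j₀ := pow_unbounded_of_one_lt _ one_lt_two
  set B : ℝ := max (2 ^ j₀) (C / α)
  obtain ⟨M₀, hM₀⟩ := eventually_atTop.1 <| (eventually_gt_atTop 0).and <| eventually_all.2
    fun i => (eventually_le_mul_natCast (hc i).1 B).and (eventually_le_mul_natCast (hc' i).1 B)
  refine ⟨M₀, (hM₀ M₀ le_rfl).1, fun Ω _ _ ξ hmeas hindep hmap hL2 hmean hvar => ?_⟩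
  set bad := {ω | ∃ i n, 2 ^ j₀ ≤ n ∧
    α * n < |∑ k ∈ range n, ξ (k, i) ω - n * ∫ ω, ξ (0, ⟨0, hr⟩) ω|}
  have hbad : ℙ bad ≤ ENNReal.ofReal (1 / 2) := by
    refine (hindep.measure_exists_column_two_pow_le_abs_sum_range_sub_gt_le hmeas hmap hL2 hvar
      hα j₀).trans (ENNReal.ofReal_le_ofReal ?_)
    have := (div_lt_iff₀ (by positivity)).1 hj₀
    rw [Fintype.card_fin, ← mul_div_assoc, div_le_iff₀ (by positivity)]
    linarith
  have hhalf : ENNReal.ofReal (1 / 2) = 1 - ENNReal.ofReal (1 / 2) := by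
    rw [one_div, ENNReal.ofReal_inv_of_pos two_pos, ENNReal.ofReal_ofNat, ENNReal.one_sub_inv_two]
  refine hhalf.trans_le <| (tsub_le_tsub_left hbad 1).trans <|
    (one_sub_le_prob_compl _).trans <| measure_mono fun ω hω M hM => ?_
  have hgood : ∀ i n, 2 ^ j₀ ≤ n →
      |∑ k ∈ range n, ξ (k, i) ω - n * ∫ ω, ξ (0, ⟨0, hr⟩) ω| ≤ α * n := by
    simpa [bad] using hω
  have hscale : ∀ b, B ≤ b → ((2 ^ j₀ : ℕ) : ℝ) ≤ b ∧ |∫ ω, ξ (0, ⟨0, hr⟩) ω| ≤ α * b :=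
    fun b hb => ⟨by exact_mod_cast (le_max_left _ _).trans hb,
      hmean.trans ((div_le_iff₀' hα).1 ((le_max_right _ _).trans hb))⟩
  calc _ ≤ ∑ _i : Fin r, 4 * α := sum_le_sum fun i _ => by
        obtain ⟨hNb, hmb⟩ := hscale _ ((hM₀ M hM).2 i).1
        obtain ⟨hNb', hmb'⟩ := hscale _ ((hM₀ M hM).2 i).2
        exact abs_sum_range_floor_div_sub_sum_range_floor_div_le (hgood i) (by positivity)
          hNb hmb hNb' hmb'
    _ = δ := by
        simp only [sum_const, card_univ, Fintype.card_fin, nsmul_eq_mul, α]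
        field_simp

/-- Tsukamoto-type uniform estimate: given `r ∈ ℕ`, `0 < c_i, c'_i ≤ 1`, `δ, C > 0`,
there is `M₀ ∈ ℕ` (depending only on the `c_i, c'_i, C, δ`) such that for any i.i.d.
family `ξ_{k,i}` (`k ∈ ℕ`, `1 ≤ i ≤ r`) of `L²` random variables with
`max{|𝔼ξ|, Var ξ} ≤ C`, the probability that for every `M ≥ M₀`
`Σ_{i} | S_i(⌊c_i M⌋)/(c_i M) − S_i(⌊c'_i M⌋)/(c'_i M) | ≤ δ` is at least `1/2`. -/
theorem exists_M0_avg_comparison (r : ℕ) (hr : 0 < r) (c c' : Fin r → ℝ)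
    (hc : ∀ i, 0 < c i ∧ c i ≤ 1) (hc' : ∀ i, 0 < c' i ∧ c' i ≤ 1)
    (δ C : ℝ) (hδ : 0 < δ) (hC : 0 < C) :
    ∃ M₀ : ℕ, 0 < M₀ ∧
      ∀ (Ω : Type) (_ : MeasureSpace Ω) (_ : IsProbabilityMeasure (ℙ : Measure Ω))
        (ξ : ℕ × Fin r → Ω → ℝ),
        (∀ p, Measurable (ξ p)) →
        iIndepFun ξ ℙ →
        (∀ p, Measure.map (ξ p) ℙ = Measure.map (ξ (0, ⟨0, hr⟩)) ℙ) →
        MemLp (ξ (0, ⟨0, hr⟩)) 2 ℙ →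
        |∫ ω, ξ (0, ⟨0, hr⟩) ω ∂ℙ| ≤ C →
        variance (ξ (0, ⟨0, hr⟩)) ℙ ≤ C →
        ENNReal.ofReal (1 / 2) ≤
          ℙ {ω | ∀ M : ℕ, M₀ ≤ M →
            ∑ i : Fin r,
              |(∑ k ∈ Finset.range ⌊c i * M⌋₊, ξ (k, i) ω) / (c i * M) -
                (∑ k ∈ Finset.range ⌊c' i * M⌋₊, ξ (k, i) ω) / (c' i * M)| ≤ δ} :=
  exists_M0_avg_comparison_general r hr c c' hc hc' δ C hδ
end

section
/- Let (X_Ω, σ, d) be a sponge system built from a subshift Ω over the alphabet ∏_{l=1}^r {0,...,m_l−1} with 2 ≤ m_1 ≤ ... ≤ m_r, and let π_i(Ω) be the projection of Ω to the first i coordinate factors. Then for all N, M ∈ ℕ: #(X_Ω|_N, ‖·‖_∞, m_r m_1^{−M}) ≤ |Ω|_N|^{L_r(M)} · ∏_{i=1}^{r−1} |π_i(Ω)|_N|^{L_i(M) − L_{i+1}(M)} and #_sep(X_Ω|_N, ‖·‖_∞, m_1^{−M}) ≥ |Ω|_N|^{L_r(M)} · ∏_{i=1}^{r−1} |π_i(Ω)|_N|^{L_i(M)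 − L_{i+1}(M)}, where L_i(M) = ⌊M log m_1/log m_i⌋. -/
open scoped Classical

noncomputable def diamBy {X : Type*} (d : X → X → ℝ) (U : Set X) : ℝ :=
  sSup {c : ℝ | ∃ x ∈ U, ∃ y ∈ U, d x y = c}

noncomputable def covNumBy {X : Type*} (d : X → X → ℝ) (ε : ℝ) : ℕ :=
  sInf {n | ∃ F : Fin n → Set X,
    (∀ i, diamBy d (F i) < ε) ∧ (⋃ i, F i) = Set.univ}

noncomputable def sepNumBy {X : Type*} (d : X → X → ℝ) (ε : ℝ) : ℕ :=
  sSup {n | ∃ s : Finset X, s.card = n ∧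
    (s : Set X).Pairwise (fun x y => ε ≤ d x y)}

noncomputable def spongeSet (m : ℕ → ℕ) (Ω : Set (ℕ → ℕ → ℕ)) :
    Set (ℕ → ℕ → ℝ) :=
  {z | ∃ ω : ℕ → (ℕ → ℕ → ℕ), (∀ k, ω k ∈ Ω) ∧
    ∀ j l, z j l = ∑' k : ℕ, (ω k j l : ℝ) / (m l : ℝ) ^ (k + 1)}

noncomputable def supDist (r : ℕ) (z w : ℕ → ℕ → ℝ) : ℝ :=
  ⨆ j : ℕ, ⨆ l ∈ Finset.Icc 1 r, |z j l - w j l|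

def projN (N : ℕ) (z : ℕ → ℕ → ℝ) : ℕ → ℕ → ℝ :=
  fun j l => if j < N then z j l else 0

def symRestr (N : ℕ) (x : ℕ → ℕ → ℕ) : ℕ → ℕ → ℕ :=
  fun k l => if k < N then x k l else 0

/-- Truncation onto the first `i` coordinate factors (the factor map `π_i`). -/
def truncL (i : ℕ) (x : ℕ → ℕ → ℕ) : ℕ → ℕ → ℕ :=
  fun k l => if l ≤ i then x k l else 0

/-- The set of admissible length-`N` words of the factor subshift `π_i(Ω)`. -/
def projWords (Ω : Set (ℕ → ℕ → ℕ)) (i N : ℕ) : Set (ℕ → ℕ → ℕ) :=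
  (fun x => truncL i (symRestr N x)) '' Ω

noncomputable def level (m : ℕ → ℕ) (i M : ℕ) : ℕ :=
  ⌊(M : ℝ) * Real.log (m 1) / Real.log (m i)⌋₊

/-!
A point of `X_Ω|_N` is given, row by row, by base-`m_l` expansions whose digits are read off a
sequence of points of `Ω`. Two points whose first `L_l(M)` digits agree in every row `l` are at
distance at most `m_l^{-L_l(M)} < m_r m_1^{-M}`. Since `L` is antitone, the digits to be matched at
position `k < L_1(M)` are those of the rows `l` with `k < L_l(M)`, an initial segment `1, …, i`,
so they make up one word of `π_i(Ω)|_N`; counting the tuples of such words gives the covering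
bound.
Conversely every tuple of words is realised by a point, and distinct tuples give points at
distance at least `m_1^{-M}`: in the first row `l` where they differ, the two expansions agree from
digit `L_l(M)` on but not before it.
-/

noncomputable def digitVal (m : ℕ) (a : ℕ → ℕ) : ℝ :=
  ∑' k : ℕ, (a k : ℝ) / (m : ℝ) ^ (k + 1)

def digitNum (m : ℕ) (a : ℕ → ℕ) : ℕ → ℕ
  | 0 => 0
  | K + 1 => m * digitNum m a K + a K

section DigitExpansion

variable {m : ℕ} {a b : ℕ → ℕ}

theorem digitNum_congr {K : ℕ} (h : ∀ k < K, a k = b k) : digitNum m a K = digitNum m b K := by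
  induction K with
  | zero => rfl
  | succ K ih =>
    simp only [digitNum, ih fun k hk => h k (by omega), h K (by omega)]

theorem digitNum_lt {K : ℕ} (ha : ∀ k < K, a k < m) : digitNum m a K < m ^ K := by
  induction K with
  | zero => simp [digitNum]
  | succ K ih =>
    have h1 := ih fun k hk => ha k (by omega)
    have h2 := ha K (by omega)
    calc m * digitNum m a K + a K < m * (digitNum m a K + 1) := by nlinarith
      _ ≤ m * m ^ K := Nat.mul_le_mul_left m h1
      _ = m ^ (K + 1) := (pow_succ' m K).symm

theorem eq_of_digitNum_eq {K : ℕ} (ha : ∀ k < K, a k < m) (hb : ∀ k < K, b k < m)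
    (h : digitNum m a K = digitNum m b K) : ∀ k < K, a k = b k := by
  induction K with
  | zero => intro k hk; omega
  | succ K ih =>
    have hm : 0 < m := (Nat.zero_le _).trans_lt (ha K (by omega))
    have hdivmod : ∀ c : ℕ → ℕ, (∀ k < K + 1, c k < m) →
        digitNum m c (K + 1) / m = digitNum m c K ∧ digitNum m c (K + 1) % m = c K :=
      fun c hc => (Nat.div_mod_unique hm).2 ⟨add_comm _ _, hc K (by omega)⟩
    obtain ⟨hdiv, hmod⟩ := hdivmod a ha
    obtain ⟨hdiv', hmod'⟩ := hdivmod b hb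
    rw [h] at hdiv hmod
    intro k hk
    rcases Nat.lt_succ_iff_lt_or_eq.1 hk with hk | rfl
    · exact ih (fun k hk => ha k (by omega)) (fun k hk => hb k (by omega))
        (hdiv.symm.trans hdiv') k hk
    · exact hmod.symm.trans hmod'

theorem sum_range_div_pow_eq_digitNum (hm : m ≠ 0) (K : ℕ) :
    ∑ k ∈ Finset.range K, (a k : ℝ) / (m : ℝ) ^ (k + 1) = digitNum m a K / (m : ℝ) ^ K := by
  induction K with
  | zero => simp [digitNum]
  | succ K ih =>
    rw [Finset.sum_range_succ, ih, digitNum]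
    push_cast
    field_simp
    ring

theorem summable_digit (hm : 2 ≤ m) (ha : ∀ k, a k < m) :
    Summable fun k => (a k : ℝ) / (m : ℝ) ^ (k + 1) := by
  have hm' : (1 : ℝ) < m := by exact_mod_cast hm
  refine .of_nonneg_of_le (fun k => by positivity) (fun k => ?_)
    (summable_geometric_of_lt_one (by positivity) (inv_lt_one_of_one_lt₀ hm'))
  calc (a k : ℝ) / (m : ℝ) ^ (k + 1) ≤ m / (m : ℝ) ^ (k + 1) := by
        gcongr; exact_mod_cast (ha k).le
    _ = ((m : ℝ)⁻¹) ^ k := by rw [pow_succ', inv_pow]; field_simp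

theorem digitVal_mem_Icc (ha : ∀ k, a k < m) : digitVal m a ∈ Set.Icc 0 1 := by
  have hm : 0 < m := (Nat.zero_le _).trans_lt (ha 0)
  refine ⟨tsum_nonneg fun k => by positivity,
    Real.tsum_le_of_sum_range_le (fun k => by positivity) fun K => ?_⟩
  rw [sum_range_div_pow_eq_digitNum (by omega), div_le_one (by positivity)]
  exact_mod_cast (digitNum_lt fun k _ => ha k).le

theorem digitVal_eq_digitNum_add (hm : 2 ≤ m) (ha : ∀ k, a k < m) (K : ℕ) :
    digitVal m a = (digitNum m a K + digitVal m (fun k => a (k + K))) / (m : ℝ) ^ K := by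
  rw [digitVal, ← (summable_digit hm ha).sum_add_tsum_nat_add K,
    sum_range_div_pow_eq_digitNum (by omega), add_div, digitVal, ← tsum_div_const]
  congr 2 with k
  rw [div_div, ← pow_add, add_right_comm]

theorem abs_digitVal_sub_le (hm : 2 ≤ m) (ha : ∀ k, a k < m) (hb : ∀ k, b k < m) {K : ℕ}
    (h : ∀ k < K, a k = b k) : |digitVal m a - digitVal m b| ≤ ((m : ℝ) ^ K)⁻¹ := by
  have : (0 : ℝ) < m := by positivity
  rw [digitVal_eq_digitNum_add hm ha K, digitVal_eq_digitNum_add hm hb K, digitNum_congr h,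
    ← sub_div, add_sub_add_left_eq_sub, abs_div, abs_of_pos (pow_pos this K), ← one_div]
  gcongr
  obtain ⟨ha0, ha1⟩ := digitVal_mem_Icc fun k => ha (k + K)
  obtain ⟨hb0, hb1⟩ := digitVal_mem_Icc fun k => hb (k + K)
  exact abs_sub_le_of_nonneg_of_le ha0 ha1 hb0 hb1

theorem inv_pow_le_abs_digitVal_sub (hm : 2 ≤ m) (ha : ∀ k, a k < m) (hb : ∀ k, b k < m)
    {K : ℕ} (htail : ∀ k ≥ K, a k = b k) (hdiff : ∃ k < K, a k ≠ b k) :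
    ((m : ℝ) ^ K)⁻¹ ≤ |digitVal m a - digitVal m b| := by
  have : (0 : ℝ) < m := by positivity
  have hnum : (digitNum m a K : ℤ) - digitNum m b K ≠ 0 := by
    obtain ⟨k, hk, hne⟩ := hdiff
    exact sub_ne_zero.2 fun h => hne <|
      eq_of_digitNum_eq (fun k _ => ha k) (fun k _ => hb k) (by exact_mod_cast h) k hk
  have htails : (fun k => a (k + K)) = fun k => b (k + K) := funext fun k => htail _ (by omega)
  rw [digitVal_eq_digitNum_add hm ha K, digitVal_eq_digitNum_add hm hb K, htails,
    ← sub_div, add_sub_add_right_eq_sub, abs_div, abs_of_pos (pow_pos this K), ← one_div]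
  gcongr
  exact_mod_cast Int.one_le_abs hnum

end DigitExpansion

def activeRows (L : ℕ → ℕ) (r k : ℕ) : ℕ :=
  Nat.findGreatest (fun i => k < L i) r

section ActiveRows

variable {L : ℕ → ℕ} {r : ℕ}

theorem activeRows_le (L : ℕ → ℕ) (r k : ℕ) : activeRows L r k ≤ r :=
  Nat.findGreatest_le r

theorem le_activeRows_iff (hL : AntitoneOn L (Set.Icc 1 r)) {l k : ℕ} (hl : l ∈ Set.Icc 1 r) :
    l ≤ activeRows L r k ↔ k < L l := by
  refine ⟨fun h => ?_, Nat.le_findGreatest (P := fun i => k < L i) hl.2⟩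
  have hne : activeRows L r k ≠ 0 := by have := hl.1; omega
  exact (Nat.findGreatest_of_ne_zero rfl hne).trans_le
    (hL hl ⟨hl.1.trans h, activeRows_le L r k⟩ h)

theorem activeRows_eq_iff_of_lt (hL : AntitoneOn L (Set.Icc 1 r)) {i k : ℕ} (hi : 1 ≤ i)
    (hir : i < r) : activeRows L r k = i ↔ L (i + 1) ≤ k ∧ k < L i := by
  rw [← not_lt, ← le_activeRows_iff hL ⟨hi, hir.le⟩, ← le_activeRows_iff hL ⟨by omega, hir⟩]
  omega

theorem activeRows_eq_self_iff (hL : AntitoneOn L (Set.Icc 1 r)) (hr : 1 ≤ r) {k : ℕ} :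
    activeRows L r k = r ↔ k < L r := by
  rw [← le_activeRows_iff hL ⟨hr, le_rfl⟩]
  have := activeRows_le L r k
  omega

theorem prod_activeRows {β : Type*} [CommMonoid β] (hL : AntitoneOn L (Set.Icc 1 r))
    (hr : 1 ≤ r) (f : ℕ → β) :
    ∏ k ∈ Finset.range (L 1), f (activeRows L r k) =
      f r ^ L r * ∏ i ∈ Finset.Icc 1 (r - 1), f i ^ (L i - L (i + 1)) := by
  have hL1 : ∀ i ∈ Set.Icc 1 r, L i ≤ L 1 := fun i hi => hL ⟨le_rfl, hr⟩ hi hi.1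
  have hmaps : ∀ k ∈ Finset.range (L 1), activeRows L r k ∈ Finset.Icc 1 r := fun k hk =>
    Finset.mem_Icc.2 ⟨(le_activeRows_iff hL ⟨le_rfl, hr⟩).2 (Finset.mem_range.1 hk),
      activeRows_le L r k⟩
  have hfiber_top : {k ∈ Finset.range (L 1) | activeRows L r k = r} = Finset.range (L r) := by
    ext k
    simp only [Finset.mem_filter, Finset.mem_range, activeRows_eq_self_iff hL hr]
    have := hL1 r ⟨hr, le_rfl⟩
    omega
  have hfiber : ∀ i ∈ Finset.Icc 1 (r - 1),
      {k ∈ Finset.range (L 1) | activeRows L r k = i} = Finset.Ico (L (i + 1)) (L i) := by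
    intro i hi
    obtain ⟨hi1, hir⟩ := Finset.mem_Icc.1 hi
    ext k
    simp only [Finset.mem_filter, Finset.mem_range, Finset.mem_Ico,
      activeRows_eq_iff_of_lt hL hi1 (by omega : i < r)]
    have := hL1 i ⟨hi1, by omega⟩
    omega
  rw [← Finset.prod_fiberwise_of_maps_to hmaps, Finset.prod_congr rfl fun i _ =>
    Finset.prod_eq_pow_card (f := fun k => f (activeRows L r k)) (b := f i) fun k hk => by
      rw [(Finset.mem_filter.1 hk).2]]
  obtain ⟨r, rfl⟩ : ∃ r', r = r' + 1 := ⟨r - 1, by omega⟩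
  rw [← Finset.insert_Icc_right_eq_Icc_add_one (by omega), Finset.prod_insert (by simp),
    hfiber_top, Finset.card_range, Nat.add_sub_cancel,
    Finset.prod_congr rfl fun i hi => by rw [hfiber i hi, Nat.card_Ico]]

end ActiveRows

section Level

variable {m : ℕ → ℕ} {M : ℕ}

theorem level_eq_log (i : ℕ) : level m i M = Nat.log (m i) (m 1 ^ M) := by
  rw [level, ← Real.natFloor_logb_natCast, Real.logb, Nat.cast_pow, Real.log_pow]

theorem level_antitoneOn {r : ℕ} (hm2 : ∀ l, 1 ≤ l → l ≤ r → 2 ≤ m l)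
    (hmono : MonotoneOn m (Set.Icc 1 r)) : AntitoneOn (fun i => level m i M) (Set.Icc 1 r) :=
  fun a ha b hb hab => by
    simp only [level_eq_log]
    exact Nat.log_anti_left (hm2 a ha.1 ha.2) (hmono ha hb hab)

theorem inv_pow_le_inv_pow_level (hm1 : m 1 ≠ 0) {l : ℕ} (hl : 1 < m l) :
    ((m 1 : ℝ) ^ M)⁻¹ ≤ ((m l : ℝ) ^ level m l M)⁻¹ := by
  have : (0 : ℝ) < m l := by positivity
  refine inv_anti₀ (by positivity) ?_
  rw [level_eq_log]
  exact_mod_cast Nat.pow_log_le_self (m l) (pow_ne_zero M hm1)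

theorem inv_pow_level_le_div {l r : ℕ} (hl : 1 < m l) (hlr : m l ≤ m r) :
    ((m l : ℝ) ^ level m l M)⁻¹ ≤ m r / ((m 1 : ℝ) ^ M + 1) := by
  have hnat : m 1 ^ M + 1 ≤ m l ^ level m l M * m r := by
    have := Nat.lt_pow_succ_log_self hl (m 1 ^ M)
    rw [← level_eq_log, pow_succ] at this
    exact this.trans_le (Nat.mul_le_mul_left _ hlr)
  have : (0 : ℝ) < m l := by positivity
  rw [le_div_iff₀ (by positivity), inv_mul_le_iff₀ (by positivity)]
  exact_mod_cast hnat

end Level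

section CoveringNumbers

variable {X α β : Type*} {d : X → X → ℝ} {ε : ℝ}

theorem covNumBy_le_natCard [Finite α] (code : X → α) {C : ℝ} (hC : 0 ≤ C) (hCε : C < ε)
    (hcode : ∀ x y, code x = code y → d x y ≤ C) : covNumBy d ε ≤ Nat.card α := by
  let e := Finite.equivFin α
  refine Nat.sInf_le ⟨fun i => {x | e (code x) = i}, fun i => ?_, ?_⟩
  · refine (Real.sSup_le ?_ hC).trans_lt hCε
    rintro c ⟨x, hx, y, hy, rfl⟩
    exact hcode x y (e.injective (hx.trans hy.symm))
  · exact Set.eq_univ_of_forall fun x => Set.mem_iUnion.2 ⟨e (code x), rfl⟩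

/-- `sepNumBy` is an `sSup` in `ℕ`, hence `0` on unbounded sets: the code bounds every
`ε`-separated set. -/
theorem natCard_le_sepNumBy [Finite α] [Finite β] (pt : α → X)
    (hpt : ∀ a b, a ≠ b → ε ≤ d (pt a) (pt b)) (code : X → β)
    (hcode : ∀ x y, code x = code y → d x y < ε) : Nat.card α ≤ sepNumBy d ε := by
  have := Fintype.ofFinite α
  have := Fintype.ofFinite β
  have hsep_code : ∀ {x y}, ε ≤ d x y → code x ≠ code y := fun h hc => (hcode _ _ hc).not_ge h
  have hbdd : BddAbove {n | ∃ s : Finset X, s.card = n ∧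
      (s : Set X).Pairwise fun x y => ε ≤ d x y} := by
    refine ⟨Fintype.card β, ?_⟩
    rintro _ ⟨s, rfl, hs⟩
    exact Finset.card_le_card_of_injOn code (fun _ _ => Finset.mem_univ _)
      fun x hx y hy h => by_contra fun hne => hsep_code (hs hx hy hne) h
  have hinj : Function.Injective pt := fun a b h => by_contra fun hne =>
    hsep_code (hpt a b hne) (congrArg code h)
  refine le_csSup hbdd ⟨Finset.univ.image pt, ?_, ?_⟩
  · rw [Finset.card_image_of_injective _ hinj, Finset.card_univ, Nat.card_eq_fintype_card]
  · rintro _ hx _ hy hxy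
    obtain ⟨a, -, rfl⟩ := Finset.mem_image.1 hx
    obtain ⟨b, -, rfl⟩ := Finset.mem_image.1 hy
    exact hpt a b fun h => hxy (congrArg pt h)

end CoveringNumbers

section SupDist

variable {r : ℕ} {z w : ℕ → ℕ → ℝ} {C : ℝ}

theorem supDist_le (hC : 0 ≤ C) (h : ∀ j l, 1 ≤ l → l ≤ r → |z j l - w j l| ≤ C) :
    supDist r z w ≤ C :=
  Real.iSup_le (fun j => Real.iSup_le (fun l => Real.iSup_le (fun hl =>
    h j l (Finset.mem_Icc.1 hl).1 (Finset.mem_Icc.1 hl).2) hC) hC) hC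

theorem abs_sub_le_supDist (hC : 0 ≤ C) (h : ∀ j l, 1 ≤ l → l ≤ r → |z j l - w j l| ≤ C)
    {j l : ℕ} (hl1 : 1 ≤ l) (hlr : l ≤ r) : |z j l - w j l| ≤ supDist r z w := by
  have hentry : ∀ j l, ⨆ (_ : l ∈ Finset.Icc 1 r), |z j l - w j l| ≤ C := fun j l =>
    Real.iSup_le (fun hl => h j l (Finset.mem_Icc.1 hl).1 (Finset.mem_Icc.1 hl).2) hC
  have hrow : ∀ j, ⨆ l ∈ Finset.Icc 1 r, |z j l - w j l| ≤ C := fun j =>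
    Real.iSup_le (hentry j) hC
  calc |z j l - w j l| = ⨆ (_ : l ∈ Finset.Icc 1 r), |z j l - w j l| :=
        (ciSup_pos (f := fun _ => |z j l - w j l|) (Finset.mem_Icc.2 ⟨hl1, hlr⟩)).symm
    _ ≤ ⨆ l ∈ Finset.Icc 1 r, |z j l - w j l| :=
        le_ciSup ⟨C, Set.forall_mem_range.2 (hentry j)⟩ l
    _ ≤ supDist r z w := le_ciSup ⟨C, Set.forall_mem_range.2 hrow⟩ j

end SupDist

noncomputable def spongePoint (m : ℕ → ℕ) (N : ℕ) (ω : ℕ → ℕ → ℕ → ℕ) : ℕ → ℕ → ℝ :=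
  projN N fun j l => digitVal (m l) fun k => ω k j l

theorem mem_projN_image_spongeSet_iff {m : ℕ → ℕ} {Ω : Set (ℕ → ℕ → ℕ)} {N : ℕ}
    {z : ℕ → ℕ → ℝ} :
    z ∈ projN N '' spongeSet m Ω ↔
      ∃ ω : ℕ → ℕ → ℕ → ℕ, (∀ k, ω k ∈ Ω) ∧ spongePoint m N ω = z := by
  constructor
  · rintro ⟨y, ⟨ω, hω, hy⟩, rfl⟩
    exact ⟨ω, hω, congrArg (projN N) (funext₂ fun j l => (hy j l).symm)⟩
  · rintro ⟨ω, hω, rfl⟩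
    exact ⟨_, ⟨ω, hω, fun j l => rfl⟩, rfl⟩

section SpongeDistance

variable {m : ℕ → ℕ} {r N : ℕ} {Ω : Set (ℕ → ℕ → ℕ)} {ω ω' : ℕ → ℕ → ℕ → ℕ}
  (hm2 : ∀ l, 1 ≤ l → l ≤ r → 2 ≤ m l) (hΩ : ∀ x ∈ Ω, ∀ k l, 1 ≤ l → l ≤ r → x k l < m l)
  (hω : ∀ k, ω k ∈ Ω) (hω' : ∀ k, ω' k ∈ Ω)
include hm2 hΩ hω hω'

theorem abs_spongePoint_sub_le {j l K : ℕ} (hl1 : 1 ≤ l) (hlr : l ≤ r)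
    (h : j < N → ∀ k < K, ω k j l = ω' k j l) :
    |spongePoint m N ω j l - spongePoint m N ω' j l| ≤ ((m l : ℝ) ^ K)⁻¹ := by
  by_cases hj : j < N
  · simp only [spongePoint, projN, if_pos hj]
    exact abs_digitVal_sub_le (hm2 l hl1 hlr) (fun k => hΩ _ (hω k) j l hl1 hlr)
      (fun k => hΩ _ (hω' k) j l hl1 hlr) (h hj)
  · have : (0 : ℝ) < m l := by have := hm2 l hl1 hlr; positivity
    simp only [spongePoint, projN, if_neg hj, sub_zero, abs_zero]
    positivity

theorem supDist_spongePoint_le (K : ℕ → ℕ) {C : ℝ} (hC0 : 0 ≤ C)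
    (hC : ∀ l, 1 ≤ l → l ≤ r → ((m l : ℝ) ^ K l)⁻¹ ≤ C)
    (hagree : ∀ j < N, ∀ l, 1 ≤ l → l ≤ r → ∀ k < K l, ω k j l = ω' k j l) :
    supDist r (spongePoint m N ω) (spongePoint m N ω') ≤ C :=
  supDist_le hC0 fun j l hl1 hlr =>
    (abs_spongePoint_sub_le hm2 hΩ hω hω' hl1 hlr fun hj => hagree j hj l hl1 hlr).trans
      (hC l hl1 hlr)

theorem inv_pow_le_supDist_spongePoint {j l K : ℕ} (hl1 : 1 ≤ l) (hlr : l ≤ r) (hj : j < N)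
    (htail : ∀ k ≥ K, ω k j l = ω' k j l) (hdiff : ∃ k < K, ω k j l ≠ ω' k j l) :
    ((m l : ℝ) ^ K)⁻¹ ≤ supDist r (spongePoint m N ω) (spongePoint m N ω') := by
  have hbound : ∀ j l, 1 ≤ l → l ≤ r →
      |spongePoint m N ω j l - spongePoint m N ω' j l| ≤ 1 := fun j l hl1 hlr => by
    simpa using abs_spongePoint_sub_le (K := 0) hm2 hΩ hω hω' hl1 hlr fun _ k hk => by omega
  refine le_trans ?_ (abs_sub_le_supDist (j := j) zero_le_one hbound hl1 hlr)
  simp only [spongePoint, projN, if_pos hj]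
  exact inv_pow_le_abs_digitVal_sub (hm2 l hl1 hlr) (fun k => hΩ _ (hω k) j l hl1 hlr)
    (fun k => hΩ _ (hω' k) j l hl1 hlr) htail hdiff

end SpongeDistance

theorem truncL_symRestr_apply {i N j l : ℕ} (x : ℕ → ℕ → ℕ) (hj : j < N) (hl : l ≤ i) :
    truncL i (symRestr N x) j l = x j l := by
  simp [truncL, symRestr, hj, hl]

section Words

variable {Ω : Set (ℕ → ℕ → ℕ)} {i N : ℕ} {w w' : ℕ → ℕ → ℕ}

theorem projWords_finite {B : ℕ} (hB : ∀ x ∈ Ω, ∀ k l, x k l < B) :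
    (projWords Ω i N).Finite := by
  let extend : (Fin N → Fin (i + 1) → Fin B) → ℕ → ℕ → ℕ := fun g j l =>
    if h : j < N ∧ l < i + 1 then g ⟨j, h.1⟩ ⟨l, h.2⟩ else 0
  refine (Set.finite_range extend).subset ?_
  rintro _ ⟨x, hx, rfl⟩
  refine ⟨fun j l => ⟨x j l, hB x hx j l⟩, funext₂ fun j l => ?_⟩
  by_cases h : j < N ∧ l < i + 1
  · simp only [extend, dif_pos h]
    exact (truncL_symRestr_apply x h.1 (by omega)).symm
  · simp only [extend, dif_neg h, truncL, symRestr]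
    split_ifs <;> omega

theorem support_of_projWords_apply_ne (hΩ0 : ∀ x ∈ Ω, ∀ k, x k 0 = 0)
    (hw : w ∈ projWords Ω i N) (hw' : w' ∈ projWords Ω i N) {j l : ℕ} (h : w j l ≠ w' j l) :
    j < N ∧ 1 ≤ l ∧ l ≤ i := by
  obtain ⟨x, hx, rfl⟩ := hw
  obtain ⟨x', hx', rfl⟩ := hw'
  by_contra hc
  apply h
  rcases Nat.eq_zero_or_pos l with rfl | hl
  · simp [truncL, symRestr, hΩ0 x hx, hΩ0 x' hx']
  · simp only [truncL, symRestr]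
    split_ifs <;> first | rfl | omega

theorem eq_of_projWords_of_forall_lt {l : ℕ} (hw : w ∈ projWords Ω i N)
    (hw' : w' ∈ projWords Ω i N) (hil : i < l) (h : ∀ l' < l, ∀ j, w j l' = w' j l') :
    w = w' := by
  obtain ⟨x, -, rfl⟩ := hw
  obtain ⟨x', -, rfl⟩ := hw'
  funext j l'
  by_cases hl' : l' < l
  · exact h l' hl' j
  · simp [truncL, show ¬l' ≤ i by omega]

theorem natCard_pi_projWords {L : ℕ → ℕ} {r : ℕ} (hL : AntitoneOn L (Set.Icc 1 r)) (hr : 1 ≤ r) :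
    Nat.card ((k : Fin (L 1)) → projWords Ω (activeRows L r k) N) =
      Nat.card (projWords Ω r N) ^ L r *
        ∏ i ∈ Finset.Icc 1 (r - 1), Nat.card (projWords Ω i N) ^ (L i - L (i + 1)) := by
  rw [Nat.card_pi, Fin.prod_univ_eq_prod_range
    (fun k => Nat.card (projWords Ω (activeRows L r k) N)),
    prod_activeRows hL hr fun i => Nat.card (projWords Ω i N)]

def wordCode (Ω : Set (ℕ → ℕ → ℕ)) (N : ℕ) (ρ : ℕ → ℕ) (K : ℕ) (ω : ℕ → ℕ → ℕ → ℕ)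
    (hω : ∀ k, ω k ∈ Ω) : (k : Fin K) → projWords Ω (ρ k) N :=
  fun k => ⟨truncL (ρ k) (symRestr N (ω k)), ω k, hω k, rfl⟩

theorem apply_eq_of_wordCode_eq {ρ : ℕ → ℕ} {K : ℕ} {ω ω' : ℕ → ℕ → ℕ → ℕ}
    {hω : ∀ k, ω k ∈ Ω} {hω' : ∀ k, ω' k ∈ Ω}
    (h : wordCode Ω N ρ K ω hω = wordCode Ω N ρ K ω' hω') {k j l : ℕ} (hk : k < K)
    (hj : j < N) (hl : l ≤ ρ k) : ω k j l = ω' k j l := by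
  have := congrArg (fun c => (c ⟨k, hk⟩ : ℕ → ℕ → ℕ) j l) h
  simpa only [wordCode, truncL_symRestr_apply _ hj hl] using this

/-- A right inverse of `wordCode`. -/
noncomputable def extendWords (ω₀ : ℕ → ℕ → ℕ) {ρ : ℕ → ℕ} {K : ℕ}
    (σ : (k : Fin K) → projWords Ω (ρ k) N) : ℕ → ℕ → ℕ → ℕ :=
  fun k => if hk : k < K then (σ ⟨k, hk⟩).2.choose else ω₀

variable {ω₀ : ℕ → ℕ → ℕ} {ρ : ℕ → ℕ} {K : ℕ}

theorem extendWords_mem (hω₀ : ω₀ ∈ Ω) (σ : (k : Fin K) → projWords Ω (ρ k) N) (k : ℕ) :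
    extendWords ω₀ σ k ∈ Ω := by
  unfold extendWords
  split_ifs
  exacts [(σ _).2.choose_spec.1, hω₀]

theorem extendWords_apply (σ : (k : Fin K) → projWords Ω (ρ k) N) (k : Fin K) {j l : ℕ}
    (hj : j < N) (hl : l ≤ ρ k) : extendWords ω₀ σ k j l = (σ k : ℕ → ℕ → ℕ) j l := by
  have := congrFun₂ (σ k).2.choose_spec.2 j l
  simp only [truncL_symRestr_apply _ hj hl] at this
  simpa [extendWords] using this

end Words

section SpongeBounds

variable {m : ℕ → ℕ} {r N : ℕ} {Ω : Set (ℕ → ℕ → ℕ)}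
  (hm2 : ∀ l, 1 ≤ l → l ≤ r → 2 ≤ m l) (hΩ : ∀ x ∈ Ω, ∀ k l, 1 ≤ l → l ≤ r → x k l < m l)
include hm2 hΩ

/-- Take the first row `l` in which `σ` and `σ'` differ. Below position `L l` this row carries
the differing symbol, and from `L l` on every active block sits in rows `< l`, where the words
agree; so the two points differ in row `l` exactly within the first `L l` digits. -/
theorem exists_inv_pow_le_supDist_extendWords (hΩ0 : ∀ x ∈ Ω, ∀ k, x k 0 = 0) {L : ℕ → ℕ}
    (hL : AntitoneOn L (Set.Icc 1 r)) {ω₀ : ℕ → ℕ → ℕ} (hω₀ : ω₀ ∈ Ω)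
    {σ σ' : (k : Fin (L 1)) → projWords Ω (activeRows L r k) N} (hne : σ ≠ σ') :
    ∃ l ∈ Set.Icc 1 r, ((m l : ℝ) ^ L l)⁻¹ ≤
      supDist r (spongePoint m N (extendWords ω₀ σ)) (spongePoint m N (extendWords ω₀ σ')) := by
  have hex : ∃ l k j, (σ k : ℕ → ℕ → ℕ) j l ≠ (σ' k : ℕ → ℕ → ℕ) j l := by
    by_contra! h
    exact hne (funext fun k => Subtype.ext (funext₂ fun j l => h l k j))
  obtain ⟨k₀, j, hne₀⟩ := Nat.find_spec hex
  set l := Nat.find hex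
  obtain ⟨hj, hl1, hlk₀⟩ := support_of_projWords_apply_ne hΩ0 (σ k₀).2 (σ' k₀).2 hne₀
  have hlr : l ≤ r := hlk₀.trans (activeRows_le L r k₀)
  refine ⟨l, ⟨hl1, hlr⟩, inv_pow_le_supDist_spongePoint hm2 hΩ (extendWords_mem hω₀ σ)
    (extendWords_mem hω₀ σ') hl1 hlr hj (fun k hk => ?_)
    ⟨k₀, (le_activeRows_iff hL ⟨hl1, hlr⟩).1 hlk₀, ?_⟩⟩
  · by_cases hkK : k < L 1
    · have hrow : activeRows L r k < l := lt_of_not_ge fun h =>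
        (le_activeRows_iff hL ⟨hl1, hlr⟩).1 h |>.not_ge hk
      have hσ : σ ⟨k, hkK⟩ = σ' ⟨k, hkK⟩ := Subtype.ext <|
        eq_of_projWords_of_forall_lt (σ _).2 (σ' _).2 hrow fun l' hl' j' =>
          by_contra fun h => Nat.find_min hex hl' ⟨⟨k, hkK⟩, j', h⟩
      simp only [extendWords, dif_pos hkK, hσ]
    · simp only [extendWords, dif_neg hkK]
  · rwa [extendWords_apply σ k₀ hj hlk₀, extendWords_apply σ' k₀ hj hlk₀]

variable (hr : 1 ≤ r) (hmono : MonotoneOn m (Set.Icc 1 r))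
  (hfin : ∀ i, (projWords Ω i N).Finite)
include hr hmono hfin

theorem covNumBy_spongeSet_le (M : ℕ) :
    covNumBy (fun z w : ↥(projN N '' spongeSet m Ω) => supDist r z w)
        ((m r : ℝ) * (m 1 : ℝ) ^ (-(M : ℤ))) ≤
      Nat.card ((k : Fin (level m 1 M)) → projWords Ω (activeRows (level m · M) r k) N) := by
  have hL := level_antitoneOn (M := M) hm2 hmono
  have := fun i => (hfin i).to_subtype
  choose wit hwitΩ hwit using fun z : ↥(projN N '' spongeSet m Ω) =>
    mem_projN_image_spongeSet_iff.1 z.2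
  have hm1 : (0 : ℝ) < m 1 := by have := hm2 1 le_rfl hr; positivity
  have hmr : (0 : ℝ) < m r := by have := hm2 r hr le_rfl; positivity
  refine covNumBy_le_natCard (fun z => wordCode Ω N (activeRows _ r) _ (wit z) (hwitΩ z))
    (C := m r / ((m 1 : ℝ) ^ M + 1)) (by positivity) ?_ fun z w hzw => ?_
  · rw [zpow_neg, zpow_natCast, ← div_eq_mul_inv]
    exact div_lt_div_of_pos_left hmr (by positivity) (lt_add_one _)
  · rw [← hwit z, ← hwit w]
    refine supDist_spongePoint_le hm2 hΩ (hwitΩ z) (hwitΩ w) _ (by positivity)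
      (fun l hl1 hlr => inv_pow_level_le_div (by have := hm2 l hl1 hlr; omega)
        (hmono ⟨hl1, hlr⟩ ⟨hr, le_rfl⟩ hlr))
      fun j hj l hl1 hlr k hk => apply_eq_of_wordCode_eq hzw
        (hk.trans_le (hL ⟨le_rfl, hr⟩ ⟨hl1, hlr⟩ hl1)) hj ((le_activeRows_iff hL ⟨hl1, hlr⟩).2 hk)

theorem le_sepNumBy_spongeSet (hΩ0 : ∀ x ∈ Ω, ∀ k, x k 0 = 0) (hΩne : Ω.Nonempty) (M : ℕ) :
    Nat.card ((k : Fin (level m 1 M)) → projWords Ω (activeRows (level m · M) r k) N) ≤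
      sepNumBy (fun z w : ↥(projN N '' spongeSet m Ω) => supDist r z w)
        ((m 1 : ℝ) ^ (-(M : ℤ))) := by
  have hL := level_antitoneOn (M := M) hm2 hmono
  have := fun i => (hfin i).to_subtype
  obtain ⟨ω₀, hω₀⟩ := hΩne
  choose wit hwitΩ hwit using fun z : ↥(projN N '' spongeSet m Ω) =>
    mem_projN_image_spongeSet_iff.1 z.2
  have hm1 : 1 < m 1 := hm2 1 le_rfl hr
  refine natCard_le_sepNumBy (fun σ => ⟨spongePoint m N (extendWords ω₀ σ),
      mem_projN_image_spongeSet_iff.2 ⟨_, extendWords_mem hω₀ σ, rfl⟩⟩) (fun σ σ' hne => ?_)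
    (fun z => wordCode Ω N (fun _ => r) (M + 1) (wit z) (hwitΩ z)) fun z w hzw => ?_
  · obtain ⟨l, ⟨hl1, hlr⟩, hl⟩ := exists_inv_pow_le_supDist_extendWords hm2 hΩ hΩ0 hL hω₀ hne
    rw [zpow_neg, zpow_natCast]
    exact (inv_pow_le_inv_pow_level (by omega) (by have := hm2 l hl1 hlr; omega)).trans hl
  · rw [← hwit z, ← hwit w, zpow_neg, zpow_natCast]
    refine (supDist_spongePoint_le hm2 hΩ (hwitΩ z) (hwitΩ w) (fun _ => M + 1)
      (C := ((m 1 : ℝ) ^ (M + 1))⁻¹) (by positivity) (fun l hl1 hlr => ?_)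
      fun j hj l hl1 hlr k hk => apply_eq_of_wordCode_eq hzw hk hj hlr).trans_lt ?_
    · gcongr
      exact_mod_cast hmono ⟨le_rfl, hr⟩ ⟨hl1, hlr⟩ hl1
    · exact inv_strictAnti₀ (by positivity)
        (pow_lt_pow_right₀ (by exact_mod_cast hm1) (Nat.lt_succ_self M))

end SpongeBounds

theorem sponge_covNum_bounds_general (r : ℕ) (hr : 1 ≤ r) (m : ℕ → ℕ)
    (hm2 : ∀ l, 1 ≤ l → l ≤ r → 2 ≤ m l)
    (hmono : ∀ l, 1 ≤ l → l < r → m l ≤ m (l + 1))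
    (Ω : Set (ℕ → ℕ → ℕ))
    (hΩdig : ∀ x ∈ Ω, ∀ k l, (1 ≤ l → l ≤ r → x k l < m l) ∧ (l = 0 ∨ r < l → x k l = 0))
    (hΩne : Ω.Nonempty)
    (N M : ℕ) :
    covNumBy (fun z w : ↥(projN N '' spongeSet m Ω) => supDist r z w)
        ((m r : ℝ) * (m 1 : ℝ) ^ (-(M : ℤ))) ≤
      Nat.card (projWords Ω r N) ^ level m r M *
        ∏ i ∈ Finset.Icc 1 (r - 1),
          Nat.card (projWords Ω i N) ^ (level m i M - level m (i + 1) M) ∧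
    Nat.card (projWords Ω r N) ^ level m r M *
        ∏ i ∈ Finset.Icc 1 (r - 1),
          Nat.card (projWords Ω i N) ^ (level m i M - level m (i + 1) M) ≤
      sepNumBy (fun z w : ↥(projN N '' spongeSet m Ω) => supDist r z w)
        ((m 1 : ℝ) ^ (-(M : ℤ))) := by
  have hmono' : MonotoneOn m (Set.Icc 1 r) :=
    monotoneOn_of_le_add_one Set.ordConnected_Icc fun l _ hl hl' => hmono l hl.1 hl'.2
  have hΩ : ∀ x ∈ Ω, ∀ k l, 1 ≤ l → l ≤ r → x k l < m l := fun x hx k l =>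
    (hΩdig x hx k l).1
  have hΩ0 : ∀ x ∈ Ω, ∀ k, x k 0 = 0 := fun x hx k => (hΩdig x hx k 0).2 (Or.inl rfl)
  have hB : ∀ x ∈ Ω, ∀ k l, x k l < m r := fun x hx k l => by
    by_cases hl : 1 ≤ l ∧ l ≤ r
    · exact (hΩ x hx k l hl.1 hl.2).trans_le (hmono' ⟨hl.1, hl.2⟩ ⟨hr, le_rfl⟩ hl.2)
    · rw [(hΩdig x hx k l).2 (by omega)]
      have := hm2 r hr le_rfl
      omega
  have hfin : ∀ i, (projWords Ω i N).Finite := fun _ => projWords_finite hB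
  rw [← natCard_pi_projWords (level_antitoneOn hm2 hmono') hr]
  exact ⟨covNumBy_spongeSet_le hm2 hΩ hr hmono' hfin M,
    le_sepNumBy_spongeSet hm2 hΩ hr hmono' hfin hΩ0 hΩne M⟩

/-- Counting bounds for the projections of a sponge system:
`#(X_Ω|_N, ‖·‖_∞, m_r m_1^{−M}) ≤ |Ω|_N|^{L_r(M)} ∏_{i=1}^{r−1} |π_i(Ω)|_N|^{L_i(M)−L_{i+1}(M)}`
and `#_sep(X_Ω|_N, ‖·‖_∞, m_1^{−M})` is at least the same quantity. -/
theorem sponge_covNum_bounds (r : ℕ) (hr : 1 ≤ r) (m : ℕ → ℕ)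
    (hm2 : ∀ l, 1 ≤ l → l ≤ r → 2 ≤ m l)
    (hmono : ∀ l, 1 ≤ l → l < r → m l ≤ m (l + 1))
    (Ω : Set (ℕ → ℕ → ℕ))
    (hΩdig : ∀ x ∈ Ω, ∀ k l, (1 ≤ l → l ≤ r → x k l < m l) ∧ (l = 0 ∨ r < l → x k l = 0))
    (hΩclosed : IsClosed Ω)
    (hΩshift : ∀ x ∈ Ω, (fun k l => x (k + 1) l) ∈ Ω)
    (hΩne : Ω.Nonempty)
    (N M : ℕ) (hN : 1 ≤ N) (hM : 1 ≤ M) :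
    covNumBy (fun z w : ↥(projN N '' spongeSet m Ω) => supDist r z w)
        ((m r : ℝ) * (m 1 : ℝ) ^ (-(M : ℤ))) ≤
      Nat.card (projWords Ω r N) ^ level m r M *
        ∏ i ∈ Finset.Icc 1 (r - 1),
          Nat.card (projWords Ω i N) ^ (level m i M - level m (i + 1) M) ∧
    Nat.card (projWords Ω r N) ^ level m r M *
        ∏ i ∈ Finset.Icc 1 (r - 1),
          Nat.card (projWords Ω i N) ^ (level m i M - level m (i + 1) M) ≤
      sepNumBy (fun z w : ↥(projN N '' spongeSet m Ω) => supDist r z w)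
        ((m 1 : ℝ) ^ (-(M : ℤ))) :=
  sponge_covNum_bounds_general r hr m hm2 hmono Ω hΩdig hΩne N M
end

section
/- Pigeonhole separation of approximate cubes: fix N, M ∈ ℕ and suppose (x_1^{(1)},...,x_r^{(1)}), ..., (x_1^{(l)},...,x_r^{(l)}) ∈ (Ω|_N)^ℕ with l ≥ 2^{rN} + 1 determine pairwise distinct approximate cubes of level M (i.e. P_{N,M}(x^{(i)}) ≠ P_{N,M}(x^{(j)}) for i ≠ j). Then there exist indices i ≠ j with dist_∞( Q_{N,M}(x^{(i)}), Q_{N,M}(x^{(j)}) ) ≥ m_1^{−M}. -/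
open scoped Classical

/-- `dist_∞(E,F) = inf{‖u−v‖_∞ : u ∈ E, v ∈ F}`. -/
noncomputable def distInf (r : ℕ) (E F : Set (ℕ → ℕ → ℝ)) : ℝ :=
  sInf {c : ℝ | ∃ u ∈ E, ∃ v ∈ F, supDist r u v = c}

/-- The symbolic cylinder `P_{N,M}(x) ⊆ (Ω|_N)^ℕ` fixing the coordinates `x_{ki}`
for `k < L_i(M)`, `1 ≤ i ≤ r`. -/
def symCylinder (r : ℕ) (m : ℕ → ℕ) (Ω : Set (ℕ → ℕ → ℕ)) (N M : ℕ)
    (x : ℕ → ℕ → ℕ → ℕ) : Set (ℕ → ℕ → ℕ → ℕ) :=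
  {y | (∀ k, y k ∈ symRestr N '' Ω) ∧
    ∀ l, 1 ≤ l → l ≤ r → ∀ k, k < level m l M → ∀ j, y k j l = x k j l}

/-- The map `(x_1,…,x_r) ↦ (Σ_k x_{k1}/m_1^k, …, Σ_k x_{kr}/m_r^k)` from sequences
of words to points of `[0,1]^{rN}`. -/
noncomputable def wordSum (m : ℕ → ℕ) (y : ℕ → ℕ → ℕ → ℕ) : ℕ → ℕ → ℝ :=
  fun j l => ∑' k : ℕ, (y k j l : ℝ) / (m l : ℝ) ^ (k + 1)

/-- The approximate cube `Q_{N,M}(x)`, the image of `P_{N,M}(x)` under `wordSum`. -/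
noncomputable def approxCube (r : ℕ) (m : ℕ → ℕ) (Ω : Set (ℕ → ℕ → ℕ)) (N M : ℕ)
    (x : ℕ → ℕ → ℕ → ℕ) : Set (ℕ → ℕ → ℝ) :=
  wordSum m '' symCylinder r m Ω N M x

lemma digits_inj (m : ℕ) (hm : 1 ≤ m) :
    ∀ (L : ℕ) (d e : ℕ → ℕ), (∀ k < L, d k < m) → (∀ k < L, e k < m) →
    (∑ k ∈ Finset.range L, d k * m ^ k) = (∑ k ∈ Finset.range L, e k * m ^ k) →
    ∀ k < L, d k = e k := by
  intro L
  induction L with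
  | zero => intro d e _ _ _ k hk; omega
  | succ L ih =>
    intro d e hd he hsum k hk
    rw [Finset.sum_range_succ', Finset.sum_range_succ'] at hsum
    simp only [pow_succ, pow_zero, one_mul] at hsum
    have h1 : (∑ k ∈ Finset.range L, d (k+1) * m ^ k) * m + d 0
        = (∑ k ∈ Finset.range L, e (k+1) * m ^ k) * m + e 0 := by
      rw [Finset.sum_mul, Finset.sum_mul]
      simp only [mul_one] at hsum
      convert hsum using 3 <;> ring
    have hd0 : d 0 < m := hd 0 (by omega)
    have he0 : e 0 < m := he 0 (by omega)
    have h0 : d 0 = e 0 := by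
      have := congrArg (· % m) h1
      simpa [Nat.mul_add_mod, Nat.mul_add_mod', Nat.add_mul_mod_self_right,
        Nat.mod_eq_of_lt hd0, Nat.mod_eq_of_lt he0] using this
    have htail : (∑ k ∈ Finset.range L, d (k+1) * m ^ k)
        = (∑ k ∈ Finset.range L, e (k+1) * m ^ k) := by
      have hm' : 0 < m := hm
      nlinarith [h1, h0]
    rcases Nat.eq_zero_or_pos k with hk0 | hkpos
    · subst hk0; exact h0
    · obtain ⟨k', rfl⟩ := Nat.exists_eq_succ_of_ne_zero (by omega : k ≠ 0)
      exact ih (fun k => d (k+1)) (fun k => e (k+1))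
        (fun k hk => hd (k+1) (by omega)) (fun k hk => he (k+1) (by omega)) htail k' (by omega)

lemma rev_digits_inj (m : ℕ) (hm : 1 ≤ m) (L : ℕ) (d e : ℕ → ℕ)
    (hd : ∀ k < L, d k < m) (he : ∀ k < L, e k < m)
    (h : (∑ k ∈ Finset.range L, d k * m ^ (L - 1 - k))
       = (∑ k ∈ Finset.range L, e k * m ^ (L - 1 - k))) :
    ∀ k < L, d k = e k := by
  have hrev : ∀ f : ℕ → ℕ, (∑ k ∈ Finset.range L, f (L - 1 - k) * m ^ k)
      = ∑ k ∈ Finset.range L, f k * m ^ (L - 1 - k) := by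
    intro f
    rw [← Finset.sum_range_reflect]
    apply Finset.sum_congr rfl
    intro k hk
    have hkL := Finset.mem_range.mp hk
    congr 2
    omega
  have h' : (∑ k ∈ Finset.range L, d (L - 1 - k) * m ^ k)
      = ∑ k ∈ Finset.range L, e (L - 1 - k) * m ^ k := by
    rw [hrev, hrev]; exact h
  have := digits_inj m hm L (fun k => d (L - 1 - k)) (fun k => e (L - 1 - k))
    (fun k hk => hd _ (by omega)) (fun k hk => he _ (by omega)) h'
  intro k hk
  have := this (L - 1 - k) (by omega)
  simpa [show L - 1 - (L - 1 - k) = k by omega] using this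

lemma anchor_eq (m : ℕ) (hm : 2 ≤ m) (d : ℕ → ℕ) (L : ℕ) :
    (∑ k ∈ Finset.range L, (d k : ℝ) / (m:ℝ)^(k+1))
      = ((∑ k ∈ Finset.range L, d k * m ^ (L - 1 - k) : ℕ) : ℝ) / (m:ℝ)^L := by
  have hm0 : (0:ℝ) < m := by positivity
  push_cast
  rw [Finset.sum_div]
  apply Finset.sum_congr rfl
  intro k hk
  have hkL := Finset.mem_range.mp hk
  rw [div_eq_div_iff (by positivity) (by positivity), mul_assoc, ← pow_add]
  congr 2
  omega

lemma geom_shift_summable (m : ℕ) (hm : 2 ≤ m) (L : ℕ) :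
    Summable (fun i : ℕ => ((m:ℝ) - 1) * (1/(m:ℝ))^(i + L + 1)) := by
  have hm0 : (0:ℝ) < m := by positivity
  have hr0 : (0:ℝ) ≤ 1/(m:ℝ) := by positivity
  have hr1 : (1/(m:ℝ)) < 1 := by rw [div_lt_one hm0]; exact_mod_cast hm
  have h1 := ((summable_geometric_of_lt_one hr0 hr1).mul_left
    (((m:ℝ) - 1) * (1/(m:ℝ))^(L+1)))
  apply h1.congr; intro i
  rw [show i + L + 1 = (L+1) + i by ring, pow_add]; ring

lemma geom_tail (m : ℕ) (hm : 2 ≤ m) (L : ℕ) :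
    ∑' i : ℕ, ((m:ℝ) - 1) * (1/(m:ℝ))^(i + L + 1) = (1/(m:ℝ))^L := by
  have hm0 : (0:ℝ) < m := by positivity
  have hm1 : (1:ℝ) < m := by exact_mod_cast hm
  have hr0 : (0:ℝ) ≤ 1/(m:ℝ) := by positivity
  have hr1 : (1/(m:ℝ)) < 1 := by rw [div_lt_one hm0]; exact hm1
  have h1 : ∀ i : ℕ, ((m:ℝ) - 1) * (1/(m:ℝ))^(i + L + 1)
      = ((m:ℝ) - 1) * (1/(m:ℝ))^(L+1) * (1/(m:ℝ))^i := by
    intro i; rw [show i + L + 1 = (L+1) + i by ring, pow_add]; ring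
  rw [tsum_congr h1, tsum_mul_left, tsum_geometric_of_lt_one hr0 hr1]
  have hne : (m:ℝ) - 1 ≠ 0 := by linarith
  have hmne : (m:ℝ) ≠ 0 := by positivity
  rw [show (1 - 1/(m:ℝ)) = ((m:ℝ)-1)/(m:ℝ) by field_simp, pow_succ]
  field_simp

lemma digit_le (m : ℕ) (d : ℕ) (hd : d < m) : (d : ℝ) ≤ (m:ℝ) - 1 := by
  have h : (d:ℝ) + 1 ≤ (m:ℝ) := by exact_mod_cast hd
  linarith

lemma digit_term_le (m : ℕ) (hm : 2 ≤ m) (d k : ℕ) (hd : d < m) :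
    (d : ℝ) / (m:ℝ)^(k+1) ≤ ((m:ℝ) - 1) * (1/(m:ℝ))^(k+1) := by
  have hm0 : (0:ℝ) < m := by positivity
  rw [div_eq_mul_inv, ← inv_pow, ← one_div]
  exact mul_le_mul_of_nonneg_right (digit_le m d hd) (by positivity)

lemma digit_summable (m : ℕ) (hm : 2 ≤ m) (d : ℕ → ℕ) (hd : ∀ k, d k < m) :
    Summable (fun k : ℕ => (d k : ℝ) / (m:ℝ)^(k+1)) := by
  have hgs := geom_shift_summable m hm 0
  have hgs' : Summable (fun k : ℕ => ((m:ℝ) - 1) * (1/(m:ℝ))^(k+1)) := by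
    apply hgs.congr; intro i; norm_num
  exact Summable.of_nonneg_of_le (fun k => by positivity)
    (fun k => digit_term_le m hm (d k) k (hd k)) hgs'

lemma wordSum_decomp (m : ℕ) (hm : 2 ≤ m) (d : ℕ → ℕ) (hd : ∀ k, d k < m) (L : ℕ) :
    ∃ t : ℝ, 0 ≤ t ∧ t ≤ (1/(m:ℝ))^L ∧
      ∑' k : ℕ, (d k : ℝ) / (m:ℝ)^(k+1)
        = (∑ k ∈ Finset.range L, (d k : ℝ) / (m:ℝ)^(k+1)) + t := by
  have hs := digit_summable m hm d hd
  have hs' : Summable (fun i : ℕ => (d (i + L) : ℝ) / (m:ℝ)^(i + L + 1)) :=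
    hs.comp_injective (add_left_injective L)
  refine ⟨∑' i : ℕ, (d (i + L) : ℝ) / (m:ℝ)^(i + L + 1), ?_, ?_, ?_⟩
  · exact tsum_nonneg (fun i => by positivity)
  · rw [← geom_tail m hm L]
    exact Summable.tsum_le_tsum (fun i => digit_term_le m hm (d (i+L)) (i+L) (hd (i+L))) hs'
      (geom_shift_summable m hm L)
  · exact (Summable.sum_add_tsum_nat_add L hs).symm

lemma word_zero (N : ℕ) (Ω : Set (ℕ → ℕ → ℕ)) (w : ℕ → ℕ → ℕ)
    (hw : w ∈ symRestr N '' Ω) (j l : ℕ) (hj : N ≤ j) : w j l = 0 := by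
  obtain ⟨z, _, rfl⟩ := hw
  simp [symRestr, Nat.not_lt.mpr hj]

lemma word_digit_lt (r : ℕ) (m : ℕ → ℕ) (Ω : Set (ℕ → ℕ → ℕ))
    (hΩdig : ∀ x ∈ Ω, ∀ k l, (1 ≤ l → l ≤ r → x k l < m l) ∧ (l = 0 ∨ r < l → x k l = 0))
    (N : ℕ) (w : ℕ → ℕ → ℕ) (hw : w ∈ symRestr N '' Ω)
    (l : ℕ) (h1 : 1 ≤ l) (h2 : l ≤ r) (hml : 2 ≤ m l) (j : ℕ) : w j l < m l := by
  obtain ⟨z, hz, rfl⟩ := hw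
  unfold symRestr
  by_cases hj : j < N
  · simpa [hj] using (hΩdig z hz j l).1 h1 h2
  · simp [hj]; omega

lemma cyl_eq_of (r : ℕ) (m : ℕ → ℕ) (Ω : Set (ℕ → ℕ → ℕ)) (N M : ℕ)
    (x x' : ℕ → ℕ → ℕ → ℕ)
    (h : ∀ l, 1 ≤ l → l ≤ r → ∀ k, k < level m l M → ∀ j, x k j l = x' k j l) :
    symCylinder r m Ω N M x = symCylinder r m Ω N M x' := by
  ext y
  constructor <;> intro hy <;>
    exact ⟨hy.1, fun l h1 h2 k hk j =>
      (hy.2 l h1 h2 k hk j).trans (by rw [h l h1 h2 k hk j] <;> rfl)⟩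

noncomputable def anchorNat (m : ℕ → ℕ) (M : ℕ) (y : ℕ → ℕ → ℕ → ℕ) (j l : ℕ) : ℕ :=
  ∑ k ∈ Finset.range (level m l M), y k j l * (m l)^(level m l M - 1 - k)

lemma cube_point_decomp (r : ℕ) (m : ℕ → ℕ) (Ω : Set (ℕ → ℕ → ℕ))
    (hΩdig : ∀ x ∈ Ω, ∀ k l, (1 ≤ l → l ≤ r → x k l < m l) ∧ (l = 0 ∨ r < l → x k l = 0))
    (N M : ℕ) (x0 y : ℕ → ℕ → ℕ → ℕ)
    (hy : y ∈ symCylinder r m Ω N M x0) (j l : ℕ) (h1 : 1 ≤ l) (h2 : l ≤ r)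
    (hml : 2 ≤ m l) :
    ∃ s : ℝ, 0 ≤ s ∧ s ≤ (1/(m l:ℝ))^(level m l M) ∧
      wordSum m y j l
        = (anchorNat m M x0 j l : ℝ) * (1/(m l:ℝ))^(level m l M) + s := by
  have hdig : ∀ k, y k j l < m l :=
    fun k => word_digit_lt r m Ω hΩdig N (y k) (hy.1 k) l h1 h2 hml j
  obtain ⟨s, hs0, hs1, hsum⟩ :=
    wordSum_decomp (m l) hml (fun k => y k j l) hdig (level m l M)
  refine ⟨s, hs0, hs1, ?_⟩
  show (∑' k : ℕ, (y k j l : ℝ) / (m l : ℝ) ^ (k + 1)) = _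
  rw [hsum]
  congr 1
  have heq : ∀ k ∈ Finset.range (level m l M), y k j l = x0 k j l :=
    fun k hk => hy.2 l h1 h2 k (Finset.mem_range.mp hk) j
  rw [Finset.sum_congr rfl (fun k hk => by rw [heq k hk]),
    anchor_eq (m l) hml (fun k => x0 k j l) (level m l M),
    one_div, inv_pow, div_eq_mul_inv]
  rfl

lemma cube_point_01 (r : ℕ) (m : ℕ → ℕ) (Ω : Set (ℕ → ℕ → ℕ))
    (hΩdig : ∀ x ∈ Ω, ∀ k l, (1 ≤ l → l ≤ r → x k l < m l) ∧ (l = 0 ∨ r < l → x k l = 0))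
    (N : ℕ) (y : ℕ → ℕ → ℕ → ℕ) (hy : ∀ k, y k ∈ symRestr N '' Ω)
    (j l : ℕ) (h1 : 1 ≤ l) (h2 : l ≤ r) (hml : 2 ≤ m l) :
    0 ≤ wordSum m y j l ∧ wordSum m y j l ≤ 1 := by
  have hdig : ∀ k, y k j l < m l :=
    fun k => word_digit_lt r m Ω hΩdig N (y k) (hy k) l h1 h2 hml j
  obtain ⟨s, hs0, hs1, hsum⟩ := wordSum_decomp (m l) hml (fun k => y k j l) hdig 0
  simp only [Finset.range_zero, Finset.sum_empty, zero_add, pow_zero] at hsum hs1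
  have : wordSum m y j l = s := hsum
  rw [this]
  exact ⟨hs0, hs1⟩


/-- Pigeonhole separation of approximate cubes: among `l ≥ 2^{rN}+1` centres with
pairwise distinct cylinders `P_{N,M}`, two of the corresponding approximate cubes
are at `ℓ^∞`-distance at least `m_1^{−M}`. -/
theorem approxCube_separation (r : ℕ) (hr : 1 ≤ r) (m : ℕ → ℕ)
    (hm2 : ∀ l, 1 ≤ l → l ≤ r → 2 ≤ m l)
    (hmono : ∀ l, 1 ≤ l → l < r → m l ≤ m (l + 1))
    (Ω : Set (ℕ → ℕ → ℕ))
    (hΩdig : ∀ x ∈ Ω, ∀ k l, (1 ≤ l → l ≤ r → x k l < m l) ∧ (l = 0 ∨ r < l → x k l = 0))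
    (N M : ℕ) (hN : 1 ≤ N) (hM : 1 ≤ M)
    (L : ℕ) (hL : 2 ^ (r * N) + 1 ≤ L)
    (x : Fin L → ℕ → ℕ → ℕ → ℕ)
    (hxword : ∀ i k, x i k ∈ symRestr N '' Ω)
    (hdistinct : ∀ i j : Fin L, i ≠ j →
      symCylinder r m Ω N M (x i) ≠ symCylinder r m Ω N M (x j)) :
    ∃ i j : Fin L, i ≠ j ∧
      (m 1 : ℝ) ^ (-(M : ℤ)) ≤
        distInf r (approxCube r m Ω N M (x i)) (approxCube r m Ω N M (x j)) := by
  classical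
  have hm1 : 2 ≤ m 1 := hm2 1 le_rfl hr
  -- pigeonhole on parities of anchors
  set sig : Fin L → (Fin N → Fin r → Bool) := fun i j l =>
    decide (anchorNat m M (x i) j.val (l.val + 1) % 2 = 0) with hsigdef
  have hcard : Fintype.card (Fin N → Fin r → Bool) < Fintype.card (Fin L) := by
    rw [Fintype.card_fun, Fintype.card_fun, Fintype.card_bool, Fintype.card_fin,
      Fintype.card_fin, Fintype.card_fin]
    calc (2^r)^N = 2^(r*N) := (pow_mul 2 r N).symm
      _ < L := by omega
  obtain ⟨i, i', hne, hsig⟩ := Fintype.exists_ne_map_eq_of_card_lt sig hcard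
  -- the fixed digits differ somewhere
  have hdiff : ¬ ∀ l, 1 ≤ l → l ≤ r → ∀ k, k < level m l M → ∀ j,
      x i k j l = x i' k j l :=
    fun h => hdistinct i i' hne (cyl_eq_of r m Ω N M (x i) (x i') h)
  push_neg at hdiff
  obtain ⟨l₀, h1, h2, k₀, hk₀, j₀, hdne⟩ := hdiff
  have hml₀ : 2 ≤ m l₀ := hm2 l₀ h1 h2
  have hj₀ : j₀ < N := by
    by_contra hj
    exact hdne ((word_zero N Ω _ (hxword i k₀) j₀ l₀ (le_of_not_gt hj)).trans
      (word_zero N Ω _ (hxword i' k₀) j₀ l₀ (le_of_not_gt hj)).symm)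
  have hdlt : ∀ (a : Fin L) k, x a k j₀ l₀ < m l₀ :=
    fun a k => word_digit_lt r m Ω hΩdig N _ (hxword a k) l₀ h1 h2 hml₀ j₀
  have hnne : anchorNat m M (x i) j₀ l₀ ≠ anchorNat m M (x i') j₀ l₀ := by
    intro h
    exact hdne (rev_digits_inj (m l₀) (by omega) (level m l₀ M)
      (fun k => x i k j₀ l₀) (fun k => x i' k j₀ l₀)
      (fun k _ => hdlt i k) (fun k _ => hdlt i' k) h k₀ hk₀)
  have hpar : anchorNat m M (x i) j₀ l₀ % 2 = anchorNat m M (x i') j₀ l₀ % 2 := by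
    have hcount := congrFun (congrFun hsig ⟨j₀, hj₀⟩) ⟨l₀ - 1, by omega⟩
    simp only [hsigdef] at hcount
    rw [show l₀ - 1 + 1 = l₀ from by omega] at hcount
    rw [decide_eq_decide] at hcount
    omega
  have hgap : anchorNat m M (x i) j₀ l₀ + 2 ≤ anchorNat m M (x i') j₀ l₀ ∨
      anchorNat m M (x i') j₀ l₀ + 2 ≤ anchorNat m M (x i) j₀ l₀ := by omega
  -- the grid scale δ and its lower bound
  set δ : ℝ := (1/(m l₀:ℝ))^(level m l₀ M) with hδ
  have hml0R : (0:ℝ) < m l₀ := by positivity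
  have hδpos : 0 < δ := by positivity
  have hcδ : (m 1:ℝ)^(-(M:ℤ)) ≤ δ := by
    have hm1R : (1:ℝ) < m 1 := by exact_mod_cast hm1
    have hmlR : (1:ℝ) < m l₀ := by exact_mod_cast hml₀
    have hlog1 : 0 < Real.log (m 1) := Real.log_pos hm1R
    have hlogl : 0 < Real.log (m l₀) := Real.log_pos hmlR
    have hfl : ((level m l₀ M : ℕ) : ℝ) ≤ (M:ℝ) * Real.log (m 1) / Real.log (m l₀) :=
      Nat.floor_le (by positivity)
    have hkey : ((level m l₀ M : ℕ) : ℝ) * Real.log (m l₀) ≤ (M:ℝ) * Real.log (m 1) := by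
      have := mul_le_mul_of_nonneg_right hfl hlogl.le
      rwa [div_mul_cancel₀ _ hlogl.ne'] at this
    have hpow : ((m l₀:ℝ))^(level m l₀ M) ≤ ((m 1:ℝ))^M := by
      have e1 : Real.log ((m l₀:ℝ)^(level m l₀ M)) ≤ Real.log ((m 1:ℝ)^M) := by
        rw [Real.log_pow, Real.log_pow]; exact_mod_cast hkey
      exact (Real.log_le_log_iff (by positivity) (by positivity)).mp e1
    rw [hδ, zpow_neg, zpow_natCast, one_div, inv_pow]
    exact inv_anti₀ (by positivity) hpow
  -- separation of points of the two cubes at coordinate (j₀, l₀)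
  have hkey : ∀ y ∈ symCylinder r m Ω N M (x i), ∀ y' ∈ symCylinder r m Ω N M (x i'),
      δ ≤ |wordSum m y j₀ l₀ - wordSum m y' j₀ l₀| := by
    intro y hy y' hy'
    obtain ⟨s, hs0, hs1, hys⟩ :=
      cube_point_decomp r m Ω hΩdig N M (x i) y hy j₀ l₀ h1 h2 hml₀
    obtain ⟨t, ht0, ht1, hyt⟩ :=
      cube_point_decomp r m Ω hΩdig N M (x i') y' hy' j₀ l₀ h1 h2 hml₀
    rw [hys, hyt]
    rcases hgap with hg | hg
    · have hgR : (anchorNat m M (x i) j₀ l₀ : ℝ) + 2 ≤ (anchorNat m M (x i') j₀ l₀ : ℝ) := by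
        exact_mod_cast hg
      have hz : (anchorNat m M (x i) j₀ l₀ : ℝ) * δ + s
          - ((anchorNat m M (x i') j₀ l₀ : ℝ) * δ + t) ≤ -δ := by nlinarith
      calc δ ≤ -((anchorNat m M (x i) j₀ l₀ : ℝ) * δ + s
          - ((anchorNat m M (x i') j₀ l₀ : ℝ) * δ + t)) := by linarith
        _ ≤ |(anchorNat m M (x i) j₀ l₀ : ℝ) * δ + s
          - ((anchorNat m M (x i') j₀ l₀ : ℝ) * δ + t)| := neg_le_abs _
    · have hgR : (anchorNat m M (x i') j₀ l₀ : ℝ) + 2 ≤ (anchorNat m M (x i) j₀ l₀ : ℝ) := by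
        exact_mod_cast hg
      have hz : δ ≤ (anchorNat m M (x i) j₀ l₀ : ℝ) * δ + s
          - ((anchorNat m M (x i') j₀ l₀ : ℝ) * δ + t) := by nlinarith
      exact hz.trans (le_abs_self _)
  -- conclude
  refine ⟨i, i', hne, ?_⟩
  have hself : ∀ a : Fin L, x a ∈ symCylinder r m Ω N M (x a) :=
    fun a => ⟨hxword a, fun _ _ _ _ _ _ => rfl⟩
  apply le_csInf
  · exact ⟨supDist r (wordSum m (x i)) (wordSum m (x i')),
      wordSum m (x i), ⟨x i, hself i, rfl⟩,
      wordSum m (x i'), ⟨x i', hself i', rfl⟩, rfl⟩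
  · rintro b ⟨u, ⟨y, hy, rfl⟩, v, ⟨y', hy', rfl⟩, rfl⟩
    have habs_le : ∀ j l, l ∈ Finset.Icc 1 r →
        |wordSum m y j l - wordSum m y' j l| ≤ 1 := by
      intro j l hl
      rw [Finset.mem_Icc] at hl
      have hu := cube_point_01 r m Ω hΩdig N y hy.1 j l hl.1 hl.2 (hm2 l hl.1 hl.2)
      have hv := cube_point_01 r m Ω hΩdig N y' hy'.1 j l hl.1 hl.2 (hm2 l hl.1 hl.2)
      rw [abs_le]; constructor <;> linarith [hu.1, hu.2, hv.1, hv.2]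
    have hinner_le : ∀ j l,
        (⨆ _ : l ∈ Finset.Icc 1 r, |wordSum m y j l - wordSum m y' j l|) ≤ 1 :=
      fun j l => Real.iSup_le (fun h => habs_le j l h) zero_le_one
    have hg_le : ∀ j,
        (⨆ l, ⨆ _ : l ∈ Finset.Icc 1 r, |wordSum m y j l - wordSum m y' j l|) ≤ 1 :=
      fun j => Real.iSup_le (fun l => hinner_le j l) zero_le_one
    have hmem : l₀ ∈ Finset.Icc 1 r := Finset.mem_Icc.mpr ⟨h1, h2⟩
    have step1 : |wordSum m y j₀ l₀ - wordSum m y' j₀ l₀| ≤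
        ⨆ l, ⨆ _ : l ∈ Finset.Icc 1 r, |wordSum m y j₀ l - wordSum m y' j₀ l| := by
      have e := ciSup_pos
        (f := fun _ : l₀ ∈ Finset.Icc 1 r => |wordSum m y j₀ l₀ - wordSum m y' j₀ l₀|) hmem
      rw [← e]
      exact le_ciSup (f := fun l =>
        ⨆ _ : l ∈ Finset.Icc 1 r, |wordSum m y j₀ l - wordSum m y' j₀ l|)
        ⟨1, by rintro _ ⟨l, rfl⟩; exact hinner_le j₀ l⟩ l₀
    have step2 :
        (⨆ l, ⨆ _ : l ∈ Finset.Icc 1 r, |wordSum m y j₀ l - wordSum m y' j₀ l|)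
          ≤ supDist r (wordSum m y) (wordSum m y') := by
      simp only [supDist]
      exact le_ciSup (f := fun j =>
        ⨆ l, ⨆ _ : l ∈ Finset.Icc 1 r, |wordSum m y j l - wordSum m y' j l|)
        ⟨1, by rintro _ ⟨j, rfl⟩; exact hg_le j⟩ j₀
    calc (m 1:ℝ)^(-(M:ℤ)) ≤ δ := hcδ
      _ ≤ |wordSum m y j₀ l₀ - wordSum m y' j₀ l₀| := hkey y hy y' hy'
      _ ≤ _ := step1
      _ ≤ _ := step2
end
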